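/- Let I ⊆ {0,…,m} be nonempty and satisfy: 1 ∈ I implies 0 ∈ I, and m−1 ∈ I implies m ∈ I. Then every element of W_{I,D_m} fixes the element (ω_I, 0) of F_{I,D_m}, and the induced map f : W̃_{D_m}/W_{I,D_m} → F_{I,D_m}, given by w·W_{I,D_m} ↦ w·(ω_I, 0), is a bijection. -/

import Mathlib

open Finset

namespace TypeD

abbrev VecZ (m : ℕ) := Fin (2 * m) → ℤ
abbrev VecR (m : ℕ) := Fin (2 * m) → ℝ

/-- `σ ∈ S_{2m}^∘`: even, and commuting with `j ↦ j*`. -/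
def InSO (m : ℕ) (σ : Equiv.Perm (Fin (2 * m))) : Prop :=
  Equiv.Perm.sign σ = 1 ∧ ∀ j, σ j.rev = (σ j).rev

/-- `t ∈ X_{*D_m}`. -/
def InXD (m : ℕ) (t : VecZ m) : Prop :=
  ∀ j j' : Fin (2 * m), t j + t j.rev = t j' + t j'.rev

/-- `ω_i ∈ ℤ^{2m}`: writing `i = 2m·b + c` with `0 ≤ c < 2m`, the first `c` entries
are `-b-1` and the rest are `-b`. -/
def omegaD (m : ℕ) (i : ℤ) (j : Fin (2 * m)) : ℤ :=
  if ((j : ℕ) : ℤ) < i % (2 * (m : ℤ)) then -(i / (2 * (m : ℤ))) - 1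
  else -(i / (2 * (m : ℤ)))

/-- `μ_k^w = w·ω_k − ω_k` for `w = t_t σ`. -/
def muD (m : ℕ) (t : VecZ m) (σ : Equiv.Perm (Fin (2 * m))) (k : ℤ) (j : Fin (2 * m)) : ℤ :=
  t j + omegaD m k (σ⁻¹ j) - omegaD m k j

/-- `ν_k^w = (μ_k^w + μ_{−k}^w)/2`, real-valued. -/
noncomputable def nuD (m : ℕ) (t : VecZ m) (σ : Equiv.Perm (Fin (2 * m))) (k : ℤ) (j : Fin (2 * m)) : ℝ :=
  ((muD m t σ k j + muD m t σ (-k) j : ℤ) : ℝ) / 2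

/-- `c_k^w = #{j : μ_k^w(j) = 2}`. -/
noncomputable def cD (m : ℕ) (t : VecZ m) (σ : Equiv.Perm (Fin (2 * m))) (k : ℤ) : ℕ :=
  Set.ncard {j : Fin (2 * m) | muD m t σ k j = 2}

/-- the cocharacter `μ = (2^{(q)}, 1^{(2m−2q)}, 0^{(q)})`. -/
def muQ (m q : ℕ) (j : Fin (2 * m)) : ℤ :=
  if (j : ℕ) < q then 2 else if (j : ℕ) < 2 * m - q then 1 else 0

/-- the coroot lattice `Q∨_{D_m}`. -/
def QveeD (m : ℕ) : Set (VecZ m) :=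
  {x | (∀ j, x j + x j.rev = 0) ∧
    Even (∑ j ∈ Finset.univ.filter (fun j : Fin (2 * m) => (j : ℕ) < m), x j)}

/-- `j ∈ A_a` (1-indexed `{1,…,a} ∪ {2m+1−a,…,2m}`). -/
def memA (m a : ℕ) (j : Fin (2 * m)) : Prop := (j : ℕ) < a ∨ 2 * m - a ≤ (j : ℕ)

/-- `j ∈ B_a` (1-indexed `{a+1,…,2m−a}`). -/
def memB (m a : ℕ) (j : Fin (2 * m)) : Prop := a ≤ (j : ℕ) ∧ (j : ℕ) < 2 * m - a

def IsIntVal (x : ℝ) : Prop := ∃ z : ℤ, x = (z : ℝ)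

/-- a half-integer: an element of `(1/2)ℤ ∖ ℤ`. -/
def IsHalfInt (x : ℝ) : Prop := (∃ z : ℤ, x = (z : ℝ) / 2) ∧ ¬ IsIntVal x

/-- `μ_k^w` is self-dual, i.e. `μ_k^w = μ_{−k}^w`. -/
def SelfDual (m : ℕ) (t : VecZ m) (σ : Equiv.Perm (Fin (2 * m))) (k : ℤ) : Prop :=
  ∀ j, muD m t σ k j = muD m t σ (-k) j

/-- (SP1) at `k`. -/
def SP1 (m : ℕ) (t : VecZ m) (σ : Equiv.Perm (Fin (2 * m))) (k : ℤ) : Prop :=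
  (∀ j, muD m t σ k j + muD m t σ (-k) j.rev = 2) ∧
  (∀ j, 0 ≤ muD m t σ k j ∧ muD m t σ k j ≤ 2)

/-- (SP2) at `k`. -/
def SP2 (m q : ℕ) (t : VecZ m) (σ : Equiv.Perm (Fin (2 * m))) (k : ℤ) : Prop :=
  cD m t σ k ≤ q

/-- (SP3) at `k`. -/
def SP3 (m q : ℕ) (t : VecZ m) (σ : Equiv.Perm (Fin (2 * m))) (k : ℕ) : Prop :=
  (SelfDual m t σ (k : ℤ) ∧ (fun j => muD m t σ (k : ℤ) j - muQ m q j) ∉ QveeD m) →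
    ∃ j₁ j₂ : Fin (2 * m), memA m k j₁ ∧ memB m k j₂ ∧
      muD m t σ (k : ℤ) j₁ = 1 ∧ muD m t σ (k : ℤ) j₂ = 1

/-- (SP1') at `k`. -/
def SP1' (m : ℕ) (t : VecZ m) (σ : Equiv.Perm (Fin (2 * m))) (k : ℤ) : Prop :=
  (∀ j, nuD m t σ k j + nuD m t σ k j.rev = 2) ∧
  (∀ j, 0 ≤ nuD m t σ k j ∧ nuD m t σ k j ≤ 2)

/-- (SP2') at `k`. -/
def SP2' (m q : ℕ) (t : VecZ m) (σ : Equiv.Perm (Fin (2 * m))) (k : ℤ) : Prop :=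
  (Set.ncard {j : Fin (2 * m) | nuD m t σ k j = 2} : ℝ) +
    (Set.ncard {j : Fin (2 * m) | ¬ IsIntVal (nuD m t σ k j)} : ℝ) / 4 ≤ (q : ℝ)

/-- `ν_k^w − μ ∈ Q∨_{D_m}`. -/
def NuCongQvee (m q : ℕ) (t : VecZ m) (σ : Equiv.Perm (Fin (2 * m))) (k : ℤ) : Prop :=
  ∃ y ∈ QveeD m, ∀ j, nuD m t σ k j = ((muQ m q j + y j : ℤ) : ℝ)

/-- (SP3') at `k`. -/
def SP3' (m q : ℕ) (t : VecZ m) (σ : Equiv.Perm (Fin (2 * m))) (k : ℕ) : Prop :=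
  ((∀ j, IsIntVal (nuD m t σ (k : ℤ) j)) ∧ ¬ NuCongQvee m q t σ (k : ℤ)) →
    ∃ j₁ j₂ : Fin (2 * m), memA m k j₁ ∧ memB m k j₂ ∧
      nuD m t σ (k : ℤ) j₁ = 1 ∧ nuD m t σ (k : ℤ) j₂ = 1

/-- the orbit `S_{2m}^∘ · μ` inside `ℝ^{2m}`. -/
def OrbitMu (m q : ℕ) : Set (VecR m) :=
  {x | ∃ σ : Equiv.Perm (Fin (2 * m)), InSO m σ ∧ ∀ j, x j = ((muQ m q (σ⁻¹ j) : ℤ) : ℝ)}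

/-- `Conv(S_{2m}^∘ · μ)`. -/
def ConvMu (m q : ℕ) : Set (VecR m) := convexHull ℝ (OrbitMu m q)

/-- the affine action of `w = t_t σ` on `ℝ^{2m}`. -/
noncomputable def actR (m : ℕ) (t : VecZ m) (σ : Equiv.Perm (Fin (2 * m))) (x : VecR m) (j : Fin (2 * m)) : ℝ :=
  (t j : ℝ) + x (σ⁻¹ j)

/-- the point `a_k = ((−1/2)^{(k)}, 0^{(2m−2k)}, (1/2)^{(k)})`. -/
noncomputable def aD (m k : ℕ) (j : Fin (2 * m)) : ℝ :=
  if (j : ℕ) < k then -(1 / 2) else if (j : ℕ) < 2 * m - k then 0 else 1 / 2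

/-- the point `a_{0'} = (−1, 0^{(2m−2)}, 1)`. -/
noncomputable def a0' (m : ℕ) (j : Fin (2 * m)) : ℝ :=
  if (j : ℕ) = 0 then -1 else if (j : ℕ) = 2 * m - 1 then 1 else 0

/-- the point `a_{m'} = ((−1/2)^{(m−1)}, 1/2, −1/2, (1/2)^{(m−1)})`. -/
noncomputable def am' (m : ℕ) (j : Fin (2 * m)) : ℝ :=
  if (j : ℕ) < m - 1 then -(1 / 2)
  else if (j : ℕ) = m - 1 then 1 / 2
  else if (j : ℕ) = m then -(1 / 2)
  else 1 / 2

/-- `ν_{0'}^w = w·a_{0'} − a_{0'}`. -/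
noncomputable def nu0' (m : ℕ) (t : VecZ m) (σ : Equiv.Perm (Fin (2 * m))) (j : Fin (2 * m)) : ℝ :=
  actR m t σ (a0' m) j - a0' m j

/-- `ν_{m'}^w = w·a_{m'} − a_{m'}`. -/
noncomputable def num' (m : ℕ) (t : VecZ m) (σ : Equiv.Perm (Fin (2 * m))) (j : Fin (2 * m)) : ℝ :=
  actR m t σ (am' m) j - am' m j

/-- membership in the real apartment `{x : x(1)+x(2m) = ⋯ = x(m)+x(m+1)}`. -/
def InApartR (m : ℕ) (x : VecR m) : Prop :=
  ∀ j j' : Fin (2 * m), x j + x j.rev = x j' + x j'.rev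

/-- membership in the base alcove `A_{D_m}`. -/
def InAlcove (m : ℕ) (x : VecR m) : Prop :=
  InApartR m x ∧
  (∀ j0 jt : Fin (2 * m), (j0 : ℕ) = 0 → 1 ≤ (jt : ℕ) → (jt : ℕ) ≤ m →
    x j0 < x jt ∧ x j0.rev - 1 < x jt) ∧
  (∀ j j' : Fin (2 * m), 1 ≤ (j : ℕ) → (j : ℕ) ≤ m - 2 → (j : ℕ) < (j' : ℕ) →
    (j' : ℕ) ≤ m → x j < x j')

/-- `w = t_t σ` is μ-permissible: `w ≡ t_μ mod W_{aff}` (equivalently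
`ν_0^w − μ ∈ Q∨_{D_m}`) and `w·x − x ∈ Conv(S_{2m}^∘ μ)` for all `x` in the base alcove. -/
def MuPermissible (m q : ℕ) (t : VecZ m) (σ : Equiv.Perm (Fin (2 * m))) : Prop :=
  NuCongQvee m q t σ 0 ∧
  ∀ x : VecR m, InAlcove m x → (fun j => actR m t σ x j - x j) ∈ ConvMu m q

/-- the coroot `α∨_{i,j} = e_i − e_j + e_{j*} − e_{i*}`. -/
def corootD (m : ℕ) (i j l : Fin (2 * m)) : ℤ :=
  (if l = i then 1 else 0) - (if l = j then 1 else 0) +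
    (if l = j.rev then 1 else 0) - (if l = i.rev then 1 else 0)

/-- `(t', σ')` represents `s_{α̃_{i,j;d}} · w` for `w = t_t σ`: on the apartment it
acts by `x ↦ w·x − ⟨α̃_{i,j;d}, w·x⟩ α∨_{i,j}`. -/
def IsReflOf (m : ℕ) (i j : Fin (2 * m)) (d : ℤ) (t : VecZ m) (σ : Equiv.Perm (Fin (2 * m)))
    (t' : VecZ m) (σ' : Equiv.Perm (Fin (2 * m))) : Prop :=
  ∀ x : VecR m, InApartR m x → ∀ l,
    actR m t' σ' x l =
      actR m t σ x l - (actR m t σ x i - actR m t σ x j - (d : ℝ)) * (corootD m i j l : ℝ)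

/-- Membership of `i` in `2mℤ ± I`. -/
def FaceIdxD (m : ℕ) (I : Finset ℕ) (i : ℤ) : Prop :=
  ∃ a ∈ I, ∃ b : ℤ, i = 2 * (m : ℤ) * b + (a : ℤ) ∨ i = 2 * (m : ℤ) * b - (a : ℤ)

/-- `v` is a `d`-face of type `(2m, I)`. -/
structure IsFaceD (m : ℕ) (I : Finset ℕ) (d : ℤ) (v : ℤ → VecZ m) : Prop where
  per : ∀ i, FaceIdxD m I i → ∀ j, v (i + 2 * (m : ℤ)) j = v i j - 1
  mono : ∀ i i', FaceIdxD m I i → FaceIdxD m I i' → i ≤ i' → ∀ j, v i' j ≤ v i j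
  sumEq : ∀ i i', FaceIdxD m I i → FaceIdxD m I i' → (∑ j, v i j) - (∑ j, v i' j) = i' - i
  dual : ∀ i, FaceIdxD m I i → ∀ j, v i j + v (-i) j.rev = d

/-- `μ_i^v := v_i − ω_i` for a face `v`. -/
def muFaceD (m : ℕ) (v : ℤ → VecZ m) (i : ℤ) (j : Fin (2 * m)) : ℤ := v i j - omegaD m i j

/-- `ε` of a translation vector: the sum of the first `m` entries mod 2. -/
def epsVec (m : ℕ) (x : VecZ m) : ZMod 2 :=
  ((∑ j ∈ Finset.univ.filter (fun j : Fin (2 * m) => (j : ℕ) < m), x j : ℤ) : ZMod 2)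

/-- membership of `(v, γ)` in `F_{I,D_m}`. -/
def MemFD (m : ℕ) (I : Finset ℕ) (v : ℤ → VecZ m) (γ : ZMod 2) : Prop :=
  (∃ d, IsFaceD m I d v) ∧
  (if 0 ∈ I then
    if m ∈ I then
      (fun j => muFaceD m v 0 j - muFaceD m v (m : ℤ) j) ∈ QveeD m ∧
        γ = epsVec m (fun j => muFaceD m v 0 j)
    else γ = epsVec m (fun j => muFaceD m v 0 j)
  else if m ∈ I then γ = epsVec m (fun j => muFaceD m v (m : ℤ) j)
  else True)

/-- membership of `t_tx σx` in `W_{I,D_m}` (the group conditions on `(tx, σx)` being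
assumed separately): it lies in `W_{aff,D_m}` and fixes `a_k` for all `k ∈ I`. -/
def MemWI (m : ℕ) (I : Finset ℕ) (tx : VecZ m) (σx : Equiv.Perm (Fin (2 * m))) : Prop :=
  tx ∈ QveeD m ∧ ∀ k ∈ I, ∀ j, (tx j : ℝ) + aD m k (σx⁻¹ j) = aD m k j

/-- (SP1) at `k` for a face. -/
def SP1F (m : ℕ) (v : ℤ → VecZ m) (k : ℕ) : Prop :=
  (∀ j, muFaceD m v (k : ℤ) j + muFaceD m v (-(k : ℤ)) j.rev = 2) ∧
  (∀ j, 0 ≤ muFaceD m v (k : ℤ) j ∧ muFaceD m v (k : ℤ) j ≤ 2)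

/-- (SP2) at `k` for a face. -/
def SP2F (m q : ℕ) (v : ℤ → VecZ m) (k : ℕ) : Prop :=
  Set.ncard {j : Fin (2 * m) | muFaceD m v (k : ℤ) j = 2} ≤ q

/-- (SP3) at `k` for a face. -/
def SP3F (m q : ℕ) (v : ℤ → VecZ m) (k : ℕ) : Prop :=
  ((∀ j, muFaceD m v (k : ℤ) j = muFaceD m v (-(k : ℤ)) j) ∧
      (fun j => muFaceD m v (k : ℤ) j - muQ m q j) ∉ QveeD m) →
    ∃ j₁ j₂ : Fin (2 * m), memA m k j₁ ∧ memB m k j₂ ∧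
      muFaceD m v (k : ℤ) j₁ = 1 ∧ muFaceD m v (k : ℤ) j₂ = 1

/-- `(v, γ) ∈ F_{I,D_m}` is μ-spin-permissible. -/
def SpinPermF (m q : ℕ) (I : Finset ℕ) (v : ℤ → VecZ m) (γ : ZMod 2) : Prop :=
  γ = epsVec m (fun j => muQ m q j) ∧ ∀ k ∈ I, SP1F m v k ∧ SP2F m q v k ∧ SP3F m q v k

/-!
An element `t_x σ` of `W_aff` fixes `a_k = (ω_k + ω_{-k})/2` exactly when it fixes both `ω_k`
and `ω_{-k}`, because `x` is integral and the entries of `ω_{±k}` lie in `{-1, 0, 1}`; by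
periodicity and duality it then fixes every `ω_i` with `i ∈ 2mℤ ± k`. So `W_{I,D_m}` consists of
the `t_x σ` with `x ∈ Q∨` that fix `ω_I`. For an antisymmetric `x`, the class `ε(t_x)` is unchanged
when `x` is permuted by `S_{2m}^∘`, so `ε` detects `x ∈ Q∨`; this makes `f` well defined and
injective.

For surjectivity, a face of type `(2m, I)` is extended one index `k ∉ I` at a time (first `0`,
then `m`, then the rest) to a face of type `(2m, {0,…,m})`: the new vectors at `2mb ± k` are
squeezed between those at the neighbouring indices of `2mℤ ± I`, and for `k = 0` or `k = m` the
remaining freedom is used to meet the parity condition that defines `F_{I,D_m}`. In a face of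
full type every coordinate `j` drops by one exactly once per period, at a step `l(j)`; the face
is then `t_{v_0} σ · ω` with `σ⁻¹ = l`, and `μ_0 - μ_m ∈ Q∨` says precisely that `σ` is even.
-/

section Omega

variable {m : ℕ}

lemma omegaD_eq_ediv (hm : 0 < m) (i : ℤ) (j : Fin (2 * m)) :
    omegaD m i j = (((j : ℕ) : ℤ) - i) / (2 * m) := by
  have hn : (0 : ℤ) < 2 * m := by positivity
  have hdiv := Int.mul_ediv_add_emod i (2 * m)
  have hr := Int.emod_nonneg i hn.ne'
  have hr' := Int.emod_lt_of_pos i hn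
  have hj := j.isLt
  unfold omegaD
  rw [eq_comm, Int.ediv_eq_iff_of_pos hn]
  split_ifs <;> constructor <;> linarith

lemma omegaD_add_mul (hm : 0 < m) (i b : ℤ) (j : Fin (2 * m)) :
    omegaD m (i + 2 * m * b) j = omegaD m i j - b := by
  rw [omegaD_eq_ediv hm, omegaD_eq_ediv hm,
    show ((j : ℕ) : ℤ) - (i + 2 * m * b) = ((j : ℕ) - i) + -b * (2 * m) by ring,
    Int.add_mul_ediv_right _ _ (by positivity)]
  ring

lemma omegaD_neg (hm : 0 < m) (i : ℤ) (j : Fin (2 * m)) :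
    omegaD m (-i) j = -omegaD m i j.rev := by
  have hn : (0 : ℤ) < 2 * m := by positivity
  have hj := j.isLt
  have hrev : ((j.rev : ℕ) : ℤ) = 2 * m - 1 - (j : ℕ) := by rw [Fin.val_rev]; omega
  set x : ℤ := (j : ℕ) + i
  have hdiv := Int.mul_ediv_add_emod x (2 * m)
  have hr := Int.emod_nonneg x hn.ne'
  have hr' := Int.emod_lt_of_pos x hn
  have hflip : ((2 * m - 1 - (j : ℕ) : ℤ) - i) / (2 * m) = -(x / (2 * m)) :=
    (Int.ediv_eq_iff_of_pos hn).2 ⟨by linarith, by linarith⟩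
  rw [omegaD_eq_ediv hm, omegaD_eq_ediv hm, hrev, hflip, neg_neg,
    show ((j : ℕ) : ℤ) - -i = x by ring]

lemma omegaD_zero (m : ℕ) (j : Fin (2 * m)) : omegaD m 0 j = 0 := by
  simp [omegaD]

lemma omegaD_natCast {k : ℕ} (hk : k < 2 * m) (j : Fin (2 * m)) :
    omegaD m k j = if (j : ℕ) < k then -1 else 0 := by
  simp only [omegaD, Int.emod_eq_of_lt (Int.natCast_nonneg k) (by omega : (k : ℤ) < 2 * m),
    Int.ediv_eq_zero_of_lt (Int.natCast_nonneg k) (by omega : (k : ℤ) < 2 * m)]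
  split_ifs <;> omega

lemma omegaD_neg_natCast {k : ℕ} (hk : k < 2 * m) (j : Fin (2 * m)) :
    omegaD m (-(k : ℤ)) j = if 2 * m - k ≤ (j : ℕ) then 1 else 0 := by
  rw [omegaD_neg (by omega), omegaD_natCast hk, Fin.val_rev]
  split_ifs <;> omega

lemma omegaD_val_self (p : Fin (2 * m)) : omegaD m (p : ℕ) p = 0 := by
  rw [omegaD_natCast p.isLt, if_neg (lt_irrefl _)]

lemma omegaD_val_add_one_self (p : Fin (2 * m)) : omegaD m ((p : ℕ) + 1) p = -1 := by
  have hm : 0 < m := by have := p.isLt; omega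
  rw [omegaD_eq_ediv hm, show ((p : ℕ) : ℤ) - ((p : ℕ) + 1) = -1 by ring,
    Int.ediv_eq_iff_of_pos (by positivity)]
  constructor <;> linarith

lemma eq_of_forall_omegaD_eq {a b : Fin (2 * m)} (h : ∀ i, omegaD m i a = omegaD m i b) :
    a = b := by
  by_contra hne
  rcases lt_or_gt_of_ne (Fin.val_ne_of_ne hne) with hab | hab
  · have := h (b : ℕ)
    rw [omegaD_natCast b.isLt, omegaD_natCast b.isLt, if_pos hab, if_neg (lt_irrefl _)] at this
    omega
  · have := h (a : ℕ)
    rw [omegaD_natCast a.isLt, omegaD_natCast a.isLt, if_pos hab, if_neg (lt_irrefl _)] at this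
    omega

end Omega

section FaceIndices

variable {m : ℕ} {I : Finset ℕ}

lemma FaceIdxD.add_mul {i : ℤ} (h : FaceIdxD m I i) (b : ℤ) : FaceIdxD m I (i + 2 * m * b) := by
  obtain ⟨a, ha, c, hc | hc⟩ := h
  · exact ⟨a, ha, c + b, Or.inl (by rw [hc]; ring)⟩
  · exact ⟨a, ha, c + b, Or.inr (by rw [hc]; ring)⟩

lemma FaceIdxD.neg {i : ℤ} (h : FaceIdxD m I i) : FaceIdxD m I (-i) := by
  obtain ⟨a, ha, c, hc | hc⟩ := h
  · exact ⟨a, ha, -c, Or.inr (by rw [hc]; ring)⟩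
  · exact ⟨a, ha, -c, Or.inl (by rw [hc]; ring)⟩

lemma FaceIdxD.mono {J : Finset ℕ} {i : ℤ} (h : FaceIdxD m I i) (hIJ : I ⊆ J) :
    FaceIdxD m J i := by
  obtain ⟨a, ha, c, hc⟩ := h
  exact ⟨a, hIJ ha, c, hc⟩

lemma faceIdxD_natCast {a : ℕ} (ha : a ∈ I) : FaceIdxD m I a :=
  ⟨a, ha, 0, Or.inl (by ring)⟩

lemma faceIdxD_insert_iff {k : ℕ} {i : ℤ} :
    FaceIdxD m (insert k I) i ↔
      FaceIdxD m I i ∨ (∃ b : ℤ, i = 2 * m * b + k) ∨ ∃ b : ℤ, i = 2 * m * b - k := by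
  simp only [FaceIdxD, Finset.mem_insert, exists_eq_or_imp, exists_or]
  exact or_comm

lemma faceIdxD_range (hm : 0 < m) (i : ℤ) : FaceIdxD m (range (m + 1)) i := by
  have hn : (0 : ℤ) < 2 * m := by positivity
  have hdiv := Int.mul_ediv_add_emod i (2 * m)
  have hr := Int.emod_nonneg i hn.ne'
  have hr' := Int.emod_lt_of_pos i hn
  by_cases hrm : i % (2 * m) ≤ m
  · exact ⟨(i % (2 * m)).toNat, mem_range.2 (by omega), i / (2 * m), Or.inl (by omega)⟩
  · refine ⟨(2 * m - i % (2 * m)).toNat, mem_range.2 (by omega), i / (2 * m) + 1, Or.inr ?_⟩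
    rw [mul_add]
    omega

lemma natCast_mem_of_faceIdxD (hIm : ∀ a ∈ I, a ≤ m) {k : ℕ} (hk : k ≤ m) {b : ℤ}
    (h : FaceIdxD m I (2 * m * b + k)) : k ∈ I := by
  obtain ⟨a, ha, c, hc | hc⟩ := h <;> rcases eq_or_ne k a with rfl | hne
  · exact ha
  · have ham := hIm a ha
    have hdvd : (2 * m : ℤ) ∣ k - a := ⟨c - b, by rw [mul_sub]; linarith⟩
    have := Int.eq_zero_of_abs_lt_dvd hdvd (by rw [abs_lt]; omega)
    omega
  · exact ha
  · have ham := hIm a ha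
    have hdvd : (2 * m : ℤ) ∣ k + a := ⟨c - b, by rw [mul_sub]; linarith⟩
    have := Int.eq_zero_of_abs_lt_dvd hdvd (by rw [abs_lt]; omega)
    omega

lemma exists_greatest_faceIdxD_lt (hm : 0 < m) (hI : I.Nonempty) (k : ℤ) :
    ∃ il, FaceIdxD m I il ∧ il < k ∧ k ≤ il + 2 * m ∧ ∀ i, FaceIdxD m I i → i < k → i ≤ il := by
  obtain ⟨a, ha⟩ := hI
  have hn : (0 : ℤ) < 2 * m := by positivity
  set z := (a : ℤ) + 2 * m * ((k - 1 - a) / (2 * m))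
  have hdiv := Int.mul_ediv_add_emod (k - 1 - a) (2 * m)
  have hr := Int.emod_nonneg (k - 1 - a) hn.ne'
  have hr' := Int.emod_lt_of_pos (k - 1 - a) hn
  have hz : FaceIdxD m I z ∧ z < k := ⟨(faceIdxD_natCast ha).add_mul _, by omega⟩
  obtain ⟨il, ⟨hil, hilk⟩, hmax⟩ :=
    Int.exists_greatest_of_bdd (P := fun i => FaceIdxD m I i ∧ i < k) ⟨k, fun i hi => hi.2.le⟩
      ⟨z, hz⟩
  exact ⟨il, hil, hilk, by linarith [hmax z hz], fun i hi hik => hmax i ⟨hi, hik⟩⟩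

lemma exists_least_faceIdxD_gt (hm : 0 < m) (hI : I.Nonempty) (k : ℤ) :
    ∃ iu, FaceIdxD m I iu ∧ k < iu ∧ iu ≤ k + 2 * m ∧ ∀ i, FaceIdxD m I i → k < i → iu ≤ i := by
  obtain ⟨il, hil, hilk, hkil, hmax⟩ := exists_greatest_faceIdxD_lt hm hI (-k)
  refine ⟨-il, hil.neg, by omega, by omega, fun i hi hki => ?_⟩
  have := hmax (-i) hi.neg (by omega)
  omega

end FaceIndices

section Faces

variable {m : ℕ} {I : Finset ℕ} {d : ℤ} {v : ℤ → VecZ m}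

lemma IsFaceD.apply_add_mul (hf : IsFaceD m I d v) {i : ℤ} (hi : FaceIdxD m I i) (b : ℤ)
    (j : Fin (2 * m)) : v (i + 2 * m * b) j = v i j - b := by
  induction b using Int.induction_on with
  | zero => simp
  | succ b ih =>
    rw [show i + 2 * m * (b + 1) = i + 2 * m * b + 2 * m by ring, hf.per _ (hi.add_mul b), ih]
    ring
  | pred b ih =>
    have := hf.per _ (hi.add_mul (-b - 1)) j
    rw [show i + 2 * m * (-b - 1) + 2 * m = i + 2 * m * -b by ring, ih] at this
    omega

lemma IsFaceD.apply_neg (hf : IsFaceD m I d v) {i : ℤ} (hi : FaceIdxD m I i) (j : Fin (2 * m)) :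
    v (-i) j = d - v i j.rev := by
  have := hf.dual i hi j.rev
  rw [Fin.rev_rev] at this
  omega

lemma IsFaceD.sum_add (hf : IsFaceD m I d v) {i : ℤ} (hi : FaceIdxD m I i) :
    ∑ j, v i j + i = m * d := by
  have hsum := hf.sumEq i (-i) hi hi.neg
  have hrev : ∑ j : Fin (2 * m), v i j.rev = ∑ j, v i j :=
    Fintype.sum_equiv Fin.revPerm _ _ (fun _ => rfl)
  rw [Finset.sum_congr rfl (fun j _ => hf.apply_neg hi j), Finset.sum_sub_distrib, hrev,
    Finset.sum_const, Finset.card_univ, Fintype.card_fin, nsmul_eq_mul] at hsum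
  push_cast at hsum
  linarith

lemma IsFaceD.apply_eq_or (hf : IsFaceD m I d v) {i i' : ℤ} (hi : FaceIdxD m I i)
    (hi' : FaceIdxD m I i') (h : i ≤ i') (h' : i' ≤ i + 2 * m) (j : Fin (2 * m)) :
    v i' j = v i j ∨ v i' j = v i j - 1 := by
  have h1 := hf.mono i i' hi hi' h j
  have h2 := hf.mono i' (i + 2 * m) hi' (by simpa using hi.add_mul 1) h' j
  have h3 := hf.per i hi j
  omega

lemma IsFaceD.add_rev_zero (hf : IsFaceD m I d v) (h0 : 0 ∈ I) (j : Fin (2 * m)) :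
    v 0 j + v 0 j.rev = d := by
  simpa using hf.dual 0 (by simpa using faceIdxD_natCast (m := m) h0) j

lemma IsFaceD.add_rev_self (hf : IsFaceD m I d v) (hmI : m ∈ I) (j : Fin (2 * m)) :
    v m j + v m j.rev = d - 1 := by
  have h1 := hf.dual m (faceIdxD_natCast hmI) j
  have h2 := hf.apply_add_mul (faceIdxD_natCast hmI) (-1) j.rev
  rw [show (m : ℤ) + 2 * m * -1 = -m by ring] at h2
  omega

end Faces

section Reversal

variable {m : ℕ}

lemma rev_lt_iff (j : Fin (2 * m)) : (j.rev : ℕ) < m ↔ ¬ (j : ℕ) < m := by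
  rw [Fin.val_rev]; omega

lemma inv_apply_rev {σ : Equiv.Perm (Fin (2 * m))} (hσ : ∀ j, σ j.rev = (σ j).rev)
    (j : Fin (2 * m)) : σ⁻¹ j.rev = (σ⁻¹ j).rev := by
  rw [Equiv.Perm.inv_eq_iff_eq, hσ, Equiv.Perm.coe_inv, Equiv.apply_symm_apply]

lemma InSO.mul {σ τ : Equiv.Perm (Fin (2 * m))} (hσ : InSO m σ) (hτ : InSO m τ) :
    InSO m (σ * τ) :=
  ⟨by rw [Equiv.Perm.sign_mul, hσ.1, hτ.1, one_mul], fun j => by simp [hσ.2, hτ.2]⟩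

lemma InSO.inv {σ : Equiv.Perm (Fin (2 * m))} (hσ : InSO m σ) : InSO m σ⁻¹ :=
  ⟨by rw [Equiv.Perm.sign_inv, hσ.1], inv_apply_rev hσ.2⟩

def lowerRep (j : Fin (2 * m)) : Fin (2 * m) := if (j : ℕ) < m then j else j.rev

lemma lowerRep_lt (j : Fin (2 * m)) : (lowerRep j : ℕ) < m := by
  unfold lowerRep; split_ifs with h
  · exact h
  · exact (rev_lt_iff j).2 h

lemma lowerRep_of_lt {j : Fin (2 * m)} (h : (j : ℕ) < m) : lowerRep j = j := if_pos h

lemma lowerRep_rev (j : Fin (2 * m)) : lowerRep j.rev = lowerRep j := by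
  simp only [lowerRep, rev_lt_iff, Fin.rev_rev]
  split_ifs <;> rfl

lemma lowerRep_eq_or (j : Fin (2 * m)) : lowerRep j = j ∨ lowerRep j = j.rev := by
  unfold lowerRep; split_ifs <;> simp

lemma lowerRep_inv_lowerRep {τ : Equiv.Perm (Fin (2 * m))} (hτ : ∀ j, τ j.rev = (τ j).rev)
    {j : Fin (2 * m)} (hj : (j : ℕ) < m) : lowerRep (τ⁻¹ (lowerRep (τ j))) = j := by
  rcases lowerRep_eq_or (τ j) with h | h <;> rw [h]
  · rw [Equiv.Perm.coe_inv, Equiv.symm_apply_apply, lowerRep_of_lt hj]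
  · rw [← hτ, Equiv.Perm.coe_inv, Equiv.symm_apply_apply, lowerRep_rev, lowerRep_of_lt hj]

lemma sign_eq_one_of_lt_imp_lt {τ : Equiv.Perm (Fin (2 * m))} (hτ : ∀ j, τ j.rev = (τ j).rev)
    (hlt : ∀ j : Fin (2 * m), (j : ℕ) < m → (τ j : ℕ) < m) : Equiv.Perm.sign τ = 1 := by
  set p : Fin (2 * m) → Prop := fun j => (j : ℕ) < m
  have hp : ∀ j, p (τ j) ↔ p j := by
    intro j
    refine ⟨fun h => ?_, hlt j⟩
    by_contra hj
    have := hlt j.rev ((rev_lt_iff j).2 hj)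
    rw [hτ, rev_lt_iff] at this
    exact this h
  have hnp : ∀ j, ¬ p (τ j) ↔ ¬ p j := fun j => not_congr (hp j)
  have hsplit : τ = (τ.subtypePerm hp).subtypeCongr (τ.subtypePerm hnp) := by
    ext j
    by_cases hj : p j <;> simp [hj]
  have hconj : Equiv.Perm.sign (τ.subtypePerm hnp) = Equiv.Perm.sign (τ.subtypePerm hp) :=
    Equiv.Perm.sign_eq_sign_of_equiv _ _
      (Equiv.subtypeEquiv Fin.revPerm (fun j => (rev_lt_iff j).symm))
      (fun j => Subtype.ext (hτ j).symm)
  rw [hsplit, Equiv.Perm.sign_subtypeCongr, hconj, Int.units_mul_self]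

lemma swap_rev_apply_rev (a x : Fin (2 * m)) :
    Equiv.swap a a.rev x.rev = (Equiv.swap a a.rev x).rev := by
  have := x.isLt
  simp only [Equiv.swap_apply_def]
  split_ifs <;> simp only [Fin.ext_iff, Fin.val_rev] at * <;> omega

def flipSet (τ : Equiv.Perm (Fin (2 * m))) : Finset (Fin (2 * m)) :=
  univ.filter fun j => (j : ℕ) < m ∧ ¬ (τ j : ℕ) < m

lemma flipSet_swap_mul {τ : Equiv.Perm (Fin (2 * m))} (hτ : ∀ j, τ j.rev = (τ j).rev)
    {j₀ : Fin (2 * m)} (hj₀ : j₀ ∈ flipSet τ) :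
    flipSet (Equiv.swap (τ j₀) (τ j₀).rev * τ) = (flipSet τ).erase j₀ := by
  have hj₀' := (Finset.mem_filter.1 hj₀).2
  have hfix : ∀ j : Fin (2 * m), (j : ℕ) < m → j ≠ j₀ →
      Equiv.swap (τ j₀) (τ j₀).rev (τ j) = τ j := by
    intro j hj hne
    refine Equiv.swap_apply_of_ne_of_ne (fun h => hne (τ.injective h)) fun h => ?_
    rw [← hτ] at h
    have := congrArg Fin.val (τ.injective h)
    rw [Fin.val_rev] at this
    omega
  ext j
  simp only [flipSet, Finset.mem_erase, Finset.mem_filter, Finset.mem_univ, true_and]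
  rw [Equiv.Perm.mul_apply]
  by_cases hj : j = j₀
  · subst hj
    rw [Equiv.swap_apply_left, rev_lt_iff]
    simp [hj₀'.2]
  · by_cases hjm : (j : ℕ) < m
    · simp [hfix j hjm hj, hj, hjm]
    · simp [hjm]

/-- Since `τ` commutes with `*`, it is determined up to sign by where it sends the lower half;
each index of the lower half sent to the upper half contributes one transposition `(a a*)`. -/
lemma sign_eq_neg_one_pow_card_flipSet {τ : Equiv.Perm (Fin (2 * m))}
    (hτ : ∀ j, τ j.rev = (τ j).rev) : Equiv.Perm.sign τ = (-1) ^ #(flipSet τ) := by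
  obtain ⟨n, hn⟩ : ∃ n, #(flipSet τ) = n := ⟨_, rfl⟩
  rw [hn]
  induction n generalizing τ with
  | zero =>
    refine (sign_eq_one_of_lt_imp_lt hτ fun j hj => ?_).trans (pow_zero _).symm
    by_contra h
    have hmem : j ∈ flipSet τ := Finset.mem_filter.2 ⟨mem_univ j, hj, h⟩
    rw [Finset.card_eq_zero.1 hn] at hmem
    exact Finset.notMem_empty j hmem
  | succ n ih =>
    obtain ⟨j₀, hj₀⟩ := Finset.card_pos.1 (by rw [hn]; exact n.succ_pos)
    have hrev : ∀ j, (Equiv.swap (τ j₀) (τ j₀).rev * τ) j.rev =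
        ((Equiv.swap (τ j₀) (τ j₀).rev * τ) j).rev := by
      intro j
      simp only [Equiv.Perm.mul_apply, hτ, swap_rev_apply_rev]
    have hsign := ih hrev (by rw [flipSet_swap_mul hτ hj₀, Finset.card_erase_of_mem hj₀, hn]; rfl)
    rw [Equiv.Perm.sign_mul, Equiv.Perm.sign_swap (fun h => ?_)] at hsign
    · rw [pow_succ, ← hsign]
      simp
    · have := congrArg Fin.val h
      rw [Fin.val_rev] at this
      omega

end Reversal

section Parity

variable {m : ℕ} {I : Finset ℕ} {d : ℤ} {v : ℤ → VecZ m}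

def halfSum (m : ℕ) (x : VecZ m) : ℤ :=
  ∑ j ∈ univ.filter (fun j : Fin (2 * m) => (j : ℕ) < m), x j

lemma epsVec_eq_halfSum (x : VecZ m) : epsVec m x = (halfSum m x : ZMod 2) := rfl

lemma mem_QveeD_iff {x : VecZ m} :
    x ∈ QveeD m ↔ (∀ j, x j + x j.rev = 0) ∧ Even (halfSum m x) := Iff.rfl

lemma epsVec_add (x y : VecZ m) : epsVec m (fun j => x j + y j) = epsVec m x + epsVec m y := by
  simp [epsVec_eq_halfSum, halfSum, Finset.sum_add_distrib]

lemma epsVec_sub (x y : VecZ m) : epsVec m (fun j => x j - y j) = epsVec m x - epsVec m y := by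
  simp [epsVec_eq_halfSum, halfSum, Finset.sum_sub_distrib]

lemma epsVec_eq_zero_iff {x : VecZ m} : epsVec m x = 0 ↔ Even (halfSum m x) := by
  rw [epsVec_eq_halfSum, ZMod.intCast_zmod_eq_zero_iff_dvd, even_iff_two_dvd]
  norm_cast

lemma sum_eq_halfSum_add_halfSum_rev (f : VecZ m) :
    ∑ j, f j = halfSum m f + halfSum m (fun j => f j.rev) := by
  rw [← Finset.sum_filter_add_sum_filter_not univ (fun j : Fin (2 * m) => (j : ℕ) < m)]
  congr 1
  refine Finset.sum_nbij' Fin.rev Fin.rev ?_ ?_ ?_ ?_ ?_ <;>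
    simp only [mem_filter, mem_univ, true_and, rev_lt_iff, Fin.rev_rev, not_not, imp_self,
      implies_true]

lemma card_filter_lt : #(univ.filter fun j : Fin (2 * m) => (j : ℕ) < m) = m := by
  rw [Fin.card_filter_val_lt]
  omega

lemma epsVec_omegaD_self : epsVec m (omegaD m m) = m := by
  rcases Nat.eq_zero_or_pos m with rfl | hm
  · simp [epsVec]
  have : ∀ j ∈ univ.filter fun j : Fin (2 * m) => (j : ℕ) < m, omegaD m m j = -1 := by
    intro j hj
    rw [omegaD_natCast (by omega), if_pos (by simpa using hj)]
  rw [epsVec_eq_halfSum, halfSum, Finset.sum_congr rfl this, Finset.sum_const, card_filter_lt]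
  simp [ZMod.neg_eq_self_mod_two]

/-- Mod 2 a vector with `y(j*) = -y(j)` is invariant under `*`, and a permutation commuting
with `*` permutes the pairs `{j, j*}`. -/
lemma epsVec_comp {y : VecZ m} (hy : ∀ j, y j + y j.rev = 0) {τ : Equiv.Perm (Fin (2 * m))}
    (hτ : ∀ j, τ j.rev = (τ j).rev) : epsVec m (fun j => y (τ j)) = epsVec m y := by
  have hfold : ∀ l, (y (lowerRep l) : ZMod 2) = y l := by
    intro l
    rcases lowerRep_eq_or l with h | h <;> rw [h]
    rw [show y l.rev = -y l by linarith [hy l], Int.cast_neg, ZMod.neg_eq_self_mod_two]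
  simp only [epsVec_eq_halfSum, halfSum, Int.cast_sum]
  refine Finset.sum_nbij' (fun j => lowerRep (τ j)) (fun l => lowerRep (τ⁻¹ l)) ?_ ?_ ?_ ?_ ?_
  · intro j _; simpa using lowerRep_lt _
  · intro l _; simpa using lowerRep_lt _
  · intro j hj; exact lowerRep_inv_lowerRep hτ (by simpa using hj)
  · intro l hl
    simpa using lowerRep_inv_lowerRep (τ := τ⁻¹) (inv_apply_rev hτ) (by simpa using hl)
  · intro j _; exact (hfold _).symm

lemma epsVec_muFaceD_zero (v : ℤ → VecZ m) :
    epsVec m (fun j => muFaceD m v 0 j) = epsVec m (v 0) := by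
  simp [muFaceD, omegaD_zero]

lemma epsVec_muFaceD_self (v : ℤ → VecZ m) :
    epsVec m (fun j => muFaceD m v m j) = epsVec m (v m) + m := by
  rw [show (fun j => muFaceD m v m j) = fun j => v m j - omegaD m m j from rfl, epsVec_sub,
    epsVec_omegaD_self, sub_eq_add_neg, ZMod.neg_eq_self_mod_two]

lemma IsFaceD.sub_mem_QveeD_iff (hf : IsFaceD m I d v) (h0 : 0 ∈ I) (hmI : m ∈ I) :
    (fun j => muFaceD m v 0 j - muFaceD m v m j) ∈ QveeD m ↔
      epsVec m (v 0) = epsVec m (v m) + m := by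
  have hanti : ∀ j, (muFaceD m v 0 j - muFaceD m v m j) +
      (muFaceD m v 0 j.rev - muFaceD m v m j.rev) = 0 := by
    intro j
    have h := j.isLt
    have := rev_lt_iff j
    simp only [muFaceD, omegaD_zero, omegaD_natCast (show m < 2 * m by omega)]
    have := hf.add_rev_zero h0 j
    have := hf.add_rev_self hmI j
    split_ifs <;> omega
  rw [mem_QveeD_iff, ← epsVec_eq_zero_iff, epsVec_sub, epsVec_muFaceD_zero,
    epsVec_muFaceD_self, sub_eq_zero]
  exact and_iff_right hanti

end Parity

section Stabilizer

variable {m : ℕ}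

lemma aD_eq {k : ℕ} (hk : k ≤ m) (j : Fin (2 * m)) :
    aD m k j = ((omegaD m k j + omegaD m (-k) j : ℤ) : ℝ) / 2 := by
  have := j.isLt
  rw [omegaD_natCast (by omega), omegaD_neg_natCast (by omega), aD]
  split_ifs <;> first | omega | norm_num

def FixesOmega (m : ℕ) (I : Finset ℕ) (tx : VecZ m) (σx : Equiv.Perm (Fin (2 * m))) : Prop :=
  ∀ i, FaceIdxD m I i → ∀ j, tx j + omegaD m i (σx⁻¹ j) = omegaD m i j

section Fixing

variable {tx : VecZ m} {τ : Fin (2 * m) → Fin (2 * m)}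

lemma fixes_omegaD_of_fixes_aD {k : ℕ} (hk : k ≤ m)
    (hfix : ∀ j, (tx j : ℝ) + aD m k (τ j) = aD m k j) (j : Fin (2 * m)) :
    tx j + omegaD m k (τ j) = omegaD m k j := by
  have h := hfix j
  rw [aD_eq hk, aD_eq hk] at h
  have hj := j.isLt
  have h2 : 2 * tx j =
      (omegaD m k j + omegaD m (-k) j) - (omegaD m k (τ j) + omegaD m (-k) (τ j)) := by
    have : ((2 * tx j : ℤ) : ℝ) = (((omegaD m k j + omegaD m (-k) j) -
        (omegaD m k (τ j) + omegaD m (-k) (τ j)) : ℤ) : ℝ) := by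
      push_cast at h ⊢
      linarith
    exact_mod_cast this
  rw [omegaD_natCast (by omega), omegaD_neg_natCast (by omega), omegaD_natCast (by omega),
    omegaD_neg_natCast (by omega)] at h2
  rw [omegaD_natCast (by omega), omegaD_natCast (by omega)]
  have := (τ j).isLt
  split_ifs at h2 ⊢ <;> omega

lemma fixes_aD_of_fixes_omegaD {k : ℕ} (hk : k ≤ m)
    (hpos : ∀ j, tx j + omegaD m k (τ j) = omegaD m k j)
    (hneg : ∀ j, tx j + omegaD m (-k) (τ j) = omegaD m (-k) j) (j : Fin (2 * m)) :
    (tx j : ℝ) + aD m k (τ j) = aD m k j := by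
  rw [aD_eq hk, aD_eq hk, ← hpos j, ← hneg j]
  push_cast
  ring

lemma fixes_omegaD_add_mul {i : ℤ} (h : ∀ j, tx j + omegaD m i (τ j) = omegaD m i j) (b : ℤ)
    (j : Fin (2 * m)) : tx j + omegaD m (i + 2 * m * b) (τ j) = omegaD m (i + 2 * m * b) j := by
  have hm : 0 < m := by have := j.isLt; omega
  rw [omegaD_add_mul hm, omegaD_add_mul hm, ← h j]
  ring

lemma fixes_omegaD_neg (hanti : ∀ j, tx j + tx j.rev = 0) (hτ : ∀ j, τ j.rev = (τ j).rev)
    {i : ℤ} (h : ∀ j, tx j + omegaD m i (τ j) = omegaD m i j) (j : Fin (2 * m)) :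
    tx j + omegaD m (-i) (τ j) = omegaD m (-i) j := by
  have hm : 0 < m := by have := j.isLt; omega
  have := h j.rev
  rw [hτ] at this
  rw [omegaD_neg hm, omegaD_neg hm]
  linarith [hanti j]

lemma antisymm_of_fixes_omegaD (hτ : ∀ j, τ j.rev = (τ j).rev) {i : ℤ}
    (hpos : ∀ j, tx j + omegaD m i (τ j) = omegaD m i j)
    (hneg : ∀ j, tx j + omegaD m (-i) (τ j) = omegaD m (-i) j) (j : Fin (2 * m)) :
    tx j + tx j.rev = 0 := by
  have hm : 0 < m := by have := j.isLt; omega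
  have h1 := hpos j.rev
  have h2 := hneg j
  rw [hτ] at h1
  rw [omegaD_neg hm, omegaD_neg hm] at h2
  linarith

end Fixing

variable {I : Finset ℕ} {tx : VecZ m} {σx : Equiv.Perm (Fin (2 * m))}

lemma MemWI.fixesOmega (hIm : ∀ a ∈ I, a ≤ m) (hσx : ∀ j, σx j.rev = (σx j).rev)
    (hw : MemWI m I tx σx) : FixesOmega m I tx σx := by
  have hanti := (mem_QveeD_iff.1 hw.1).1
  have hτ := inv_apply_rev hσx
  rintro i ⟨a, ha, b, rfl | rfl⟩ j
  · rw [add_comm (2 * (m : ℤ) * b)]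
    exact fixes_omegaD_add_mul (fixes_omegaD_of_fixes_aD (hIm a ha) (hw.2 a ha)) b j
  · rw [sub_eq_neg_add]
    exact fixes_omegaD_add_mul
      (fixes_omegaD_neg hanti hτ (fixes_omegaD_of_fixes_aD (hIm a ha) (hw.2 a ha))) b j

lemma memWI_of_fixesOmega (hI : I.Nonempty) (hIm : ∀ a ∈ I, a ≤ m)
    (hσx : ∀ j, σx j.rev = (σx j).rev) (hfix : FixesOmega m I tx σx)
    (heven : Even (halfSum m tx)) : MemWI m I tx σx := by
  obtain ⟨a, ha⟩ := hI
  have hanti := antisymm_of_fixes_omegaD (inv_apply_rev hσx)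
    (hfix a (faceIdxD_natCast ha)) (hfix (-a) (faceIdxD_natCast ha).neg)
  exact ⟨mem_QveeD_iff.2 ⟨hanti, heven⟩, fun k hk => fixes_aD_of_fixes_omegaD (hIm k hk)
    (hfix k (faceIdxD_natCast hk)) (hfix (-k) (faceIdxD_natCast hk).neg)⟩

lemma fixesOmega_and_epsVec_of_memWI (hIm : ∀ a ∈ I, a ≤ m) {tx : VecZ m}
    {σx : Equiv.Perm (Fin (2 * m))} (hσx : InSO m σx) (hw : MemWI m I tx σx) :
    FixesOmega m I tx σx ∧ epsVec m tx = 0 :=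
  ⟨hw.fixesOmega hIm hσx.2, epsVec_eq_zero_iff.2 (mem_QveeD_iff.1 hw.1).2⟩

end Stabilizer

section Injectivity

variable {m : ℕ} {I : Finset ℕ} {t t' : VecZ m} {σ σ' : Equiv.Perm (Fin (2 * m))}

/-- `w⁻¹ w' = t_tx σx` with `tx = σ⁻¹ (t' - t)` and `σx = σ⁻¹ σ'`. -/
lemma exists_memWI_of_image_eq (hI : I.Nonempty) (hIm : ∀ a ∈ I, a ≤ m) (hσ : InSO m σ)
    (hσ' : InSO m σ')
    (heq : ∀ i, FaceIdxD m I i → ∀ j, t j + omegaD m i (σ⁻¹ j) = t' j + omegaD m i (σ'⁻¹ j))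
    (heps : epsVec m t = epsVec m t') :
    ∃ (tx : VecZ m) (σx : Equiv.Perm (Fin (2 * m))),
      InXD m tx ∧ InSO m σx ∧ MemWI m I tx σx ∧ (∀ j, t' j = t j + tx (σ⁻¹ j)) ∧
        σ' = σ * σx := by
  set tx : VecZ m := fun l => t' (σ l) - t (σ l)
  have hσx := hσ.inv.mul hσ'
  have hfix : FixesOmega m I tx (σ⁻¹ * σ') := by
    intro i hi l
    have := heq i hi (σ l)
    simp only [mul_inv_rev, inv_inv, Equiv.Perm.mul_apply, Equiv.Perm.coe_inv,
      Equiv.symm_apply_apply] at this ⊢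
    simp only [tx]
    linarith
  obtain ⟨a, ha⟩ := hI
  have hanti := antisymm_of_fixes_omegaD (inv_apply_rev hσx.2)
    (hfix a (faceIdxD_natCast ha)) (hfix (-a) (faceIdxD_natCast ha).neg)
  have heven : Even (halfSum m tx) := by
    have hy : ∀ j, (t' j - t j) + (t' j.rev - t j.rev) = 0 := by
      intro j
      have := hanti (σ⁻¹ j)
      simpa [tx, hσ.2] using this
    rw [← epsVec_eq_zero_iff, epsVec_comp hy hσ.2, epsVec_sub, heps, sub_self]
  refine ⟨tx, σ⁻¹ * σ', fun j j' => by rw [hanti j, hanti j'], hσx,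
    memWI_of_fixesOmega ⟨a, ha⟩ hIm hσx.2 hfix heven, fun j => ?_, by rw [mul_inv_cancel_left]⟩
  simp [tx]

lemma image_eq_of_memWI (hIm : ∀ a ∈ I, a ≤ m) (hσ : InSO m σ) {tx : VecZ m}
    {σx : Equiv.Perm (Fin (2 * m))} (hσx : InSO m σx) (hw : MemWI m I tx σx)
    (ht' : ∀ j, t' j = t j + tx (σ⁻¹ j)) :
    (∀ i, FaceIdxD m I i → ∀ j,
      t j + omegaD m i (σ⁻¹ j) = t' j + omegaD m i ((σ * σx)⁻¹ j)) ∧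
      epsVec m t = epsVec m t' := by
  obtain ⟨hfix, heps⟩ := fixesOmega_and_epsVec_of_memWI hIm hσx hw
  refine ⟨fun i hi j => ?_, ?_⟩
  · rw [ht', mul_inv_rev, Equiv.Perm.mul_apply, add_assoc, hfix i hi]
  · have hanti := (mem_QveeD_iff.1 hw.1).1
    rw [show t' = fun j => t j + tx (σ⁻¹ j) from funext ht', epsVec_add,
      epsVec_comp hanti (inv_apply_rev hσ.2), heps, add_zero]

end Injectivity

section Extension

variable {m : ℕ} {I : Finset ℕ} {k : ℕ} {d : ℤ} {x : VecZ m} {v : ℤ → VecZ m} {il iu : ℤ}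

structure IsGap (m : ℕ) (I : Finset ℕ) (k : ℕ) (il iu : ℤ) : Prop where
  faceIdx_left : FaceIdxD m I il
  faceIdx_right : FaceIdxD m I iu
  left_lt : il < k
  lt_right : (k : ℤ) < iu
  le_left : ∀ i, FaceIdxD m I i → i < k → i ≤ il
  right_le : ∀ i, FaceIdxD m I i → (k : ℤ) < i → iu ≤ i

lemma not_faceIdxD_natCast (hIm : ∀ a ∈ I, a ≤ m) (hk : k ≤ m) (hkI : k ∉ I) :
    ¬ FaceIdxD m I k := fun h => hkI (natCast_mem_of_faceIdxD hIm hk (b := 0) (by simpa using h))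

lemma exists_isGap (hm : 0 < m) (hI : I.Nonempty) (hIm : ∀ a ∈ I, a ≤ m) (hk : k ≤ m)
    (hkI : k ∉ I) : ∃ il iu, IsGap m I k il iu ∧ iu ≤ il + 2 * m := by
  obtain ⟨il, hil, hilk, hkil, hmax⟩ := exists_greatest_faceIdxD_lt hm hI k
  obtain ⟨iu, hiu, hkiu, -, hmin⟩ := exists_least_faceIdxD_gt hm hI k
  refine ⟨il, iu, ⟨hil, hiu, hilk, hkiu, hmax, hmin⟩, hmin _ (by simpa using hil.add_mul 1) ?_⟩
  rcases hkil.lt_or_eq with h | h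
  · exact h
  · exact absurd (h ▸ (by simpa using hil.add_mul 1)) (not_faceIdxD_natCast hIm hk hkI)

lemma IsGap.drop {k : ℕ} {il iu : ℤ} (hg : IsGap m I k il iu) (hf : IsFaceD m I d v)
    (hgap : iu ≤ il + 2 * m) :
    (∀ j, v il j = v iu j ∨ v il j = v iu j + 1) ∧ ∑ j, (v il j - v iu j) = iu - il := by
  refine ⟨fun j => ?_, ?_⟩
  · rcases hf.apply_eq_or hg.faceIdx_left hg.faceIdx_right
      (by linarith [hg.left_lt, hg.lt_right]) hgap j with h | h <;> omega
  · rw [Finset.sum_sub_distrib]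
    exact hf.sumEq il iu hg.faceIdx_left hg.faceIdx_right

def extendFace (m k : ℕ) (d : ℤ) (x : VecZ m) (v : ℤ → VecZ m) : ℤ → VecZ m := fun i =>
  if (i - k) % (2 * m) = 0 then fun j => x j - (i - k) / (2 * m)
  else if (i + k) % (2 * m) = 0 then fun j => d - x j.rev - (i + k) / (2 * m)
  else v i

lemma extendFace_add_mul (b : ℤ) (j : Fin (2 * m)) :
    extendFace m k d x v (2 * m * b + k) j = x j - b := by
  have hm : (2 * m : ℤ) ≠ 0 := by have := j.isLt; omega
  simp [extendFace, Int.mul_ediv_cancel_left _ hm]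

lemma extendFace_sub_mul (hk : k ≤ m) (hd0 : k = 0 → ∀ j, x j + x j.rev = d)
    (hdm : k = m → ∀ j, x j + x j.rev = d - 1) (b : ℤ) (j : Fin (2 * m)) :
    extendFace m k d x v (2 * m * b - k) j = d - x j.rev - b := by
  have hm : 0 < m := by have := j.isLt; omega
  rcases Nat.eq_zero_or_pos k with rfl | hk0
  · rw [show 2 * m * b - ((0 : ℕ) : ℤ) = 2 * m * b + (0 : ℕ) by simp, extendFace_add_mul]
    linarith [hd0 rfl j]
  rcases hk.lt_or_eq with hkm | rfl
  · have hne : (2 * m * b - k - k) % (2 * m : ℤ) ≠ 0 := by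
      rw [show (2 * m * b - k - k : ℤ) = 2 * m - 2 * k + 2 * m * (b - 1) by ring,
        Int.add_mul_emod_self_left, Int.emod_eq_of_lt (by omega) (by omega)]
      omega
    simp [extendFace, hne, Int.mul_ediv_cancel_left _ (show (2 * m : ℤ) ≠ 0 by omega)]
  · rw [show 2 * (k : ℤ) * b - k = 2 * k * (b - 1) + k by ring, extendFace_add_mul]
    linarith [hdm rfl j]

lemma extendFace_of_faceIdxD (hIm : ∀ a ∈ I, a ≤ m) (hk : k ≤ m) (hkI : k ∉ I) {i : ℤ}
    (hi : FaceIdxD m I i) : extendFace m k d x v i = v i := by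
  have h1 : (i - k) % (2 * m) ≠ 0 := fun h => by
    have := Int.mul_ediv_add_emod (i - k) (2 * m)
    exact hkI <| natCast_mem_of_faceIdxD hIm hk (b := (i - k) / (2 * m))
      (by rwa [show 2 * m * ((i - k) / (2 * m)) + k = i by omega])
  have h2 : (i + k) % (2 * m) ≠ 0 := fun h => by
    have := Int.mul_ediv_add_emod (i + k) (2 * m)
    exact hkI <| natCast_mem_of_faceIdxD hIm hk (b := -((i + k) / (2 * m)))
      (by rw [show 2 * m * -((i + k) / (2 * m)) + k = -i by linarith]; exact hi.neg)
  simp [extendFace, h1, h2]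

namespace IsGap

lemma sub_le_of_le_add_mul (hf : IsFaceD m I d v) (hg : IsGap m I k il iu)
    (hk : ¬ FaceIdxD m I k) (hx : ∀ j, x j ≤ v il j) {i b : ℤ} (hi : FaceIdxD m I i)
    (hib : i ≤ 2 * m * b + k) (j : Fin (2 * m)) : x j - b ≤ v i j := by
  have hi' := hi.add_mul (-b)
  have hlt : i + 2 * m * -b < k := lt_of_le_of_ne (by linarith) fun h => hk (h ▸ hi')
  have hmono := hf.mono _ il hi' hg.faceIdx_left (hg.le_left _ hi' hlt) j
  have hper := hf.apply_add_mul hi' b j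
  rw [show i + 2 * m * -b + 2 * m * b = i by ring] at hper
  linarith [hx j]

lemma le_sub_of_add_mul_le (hf : IsFaceD m I d v) (hg : IsGap m I k il iu)
    (hk : ¬ FaceIdxD m I k) (hx : ∀ j, v iu j ≤ x j) {i b : ℤ} (hi : FaceIdxD m I i)
    (hib : 2 * m * b + k ≤ i) (j : Fin (2 * m)) : v i j ≤ x j - b := by
  have hi' := hi.add_mul (-b)
  have hlt : (k : ℤ) < i + 2 * m * -b := lt_of_le_of_ne (by linarith) fun h => hk (h ▸ hi')
  have hmono := hf.mono iu _ hg.faceIdx_right hi' (hg.right_le _ hi' hlt) j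
  have hper := hf.apply_add_mul hi' b j
  rw [show i + 2 * m * -b + 2 * m * b = i by ring] at hper
  linarith [hx j]

lemma dual_sub_le_of_le_sub_mul (hf : IsFaceD m I d v) (hg : IsGap m I k il iu)
    (hk : ¬ FaceIdxD m I k) (hx : ∀ j, v iu j ≤ x j) {i b : ℤ} (hi : FaceIdxD m I i)
    (hib : i ≤ 2 * m * b - k) (j : Fin (2 * m)) : d - x j.rev - b ≤ v i j := by
  have := hg.le_sub_of_add_mul_le hf hk hx hi.neg (b := -b) (by linarith) j.rev
  have hdual := hf.apply_neg hi.neg j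
  rw [neg_neg] at hdual
  linarith

lemma le_dual_sub_of_sub_mul_le (hf : IsFaceD m I d v) (hg : IsGap m I k il iu)
    (hk : ¬ FaceIdxD m I k) (hx : ∀ j, x j ≤ v il j) {i b : ℤ} (hi : FaceIdxD m I i)
    (hib : 2 * m * b - k ≤ i) (j : Fin (2 * m)) : v i j ≤ d - x j.rev - b := by
  have := hg.sub_le_of_le_add_mul hf hk hx hi.neg (b := -b) (by linarith) j.rev
  have hdual := hf.apply_neg hi.neg j
  rw [neg_neg] at hdual
  linarith

end IsGap

/-- Between `2mb + k` and a later `2mb' - k` with `0 < k < m` lies the index `2mb + m`. -/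
lemma extendFace_sub_mul_le_add_mul (hk : k ≤ m) (hk' : ¬ FaceIdxD m I k) (hf : IsFaceD m I d v)
    (hg : IsGap m I k il iu) (hcross : 0 < k → k < m → 0 ∈ I ∧ m ∈ I)
    (hxb : ∀ j, v iu j ≤ x j ∧ x j ≤ v il j) (hd0 : k = 0 → ∀ j, x j + x j.rev = d)
    (hdm : k = m → ∀ j, x j + x j.rev = d - 1) {b b' : ℤ} (hbb' : 2 * m * b + k ≤ 2 * m * b' - k)
    (j : Fin (2 * m)) :
    extendFace m k d x v (2 * m * b' - k) j ≤ extendFace m k d x v (2 * m * b + k) j := by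
  rw [extendFace_add_mul, extendFace_sub_mul hk hd0 hdm]
  have hn : (0 : ℤ) < 2 * m := by have := j.isLt; omega
  rcases Nat.eq_zero_or_pos k with rfl | hk0
  · have : b ≤ b' := Int.le_of_mul_le_mul_left (by simpa using hbb') hn
    linarith [hd0 rfl j]
  rcases hk.lt_or_eq with hkm | rfl
  · obtain ⟨-, hmI⟩ := hcross hk0 hkm
    have hbb : b + 1 ≤ b' := Int.lt_of_mul_lt_mul_left (by linarith) hn.le
    have hM := (faceIdxD_natCast (m := m) hmI).add_mul b
    have h1 := hg.le_sub_of_add_mul_le hf hk' (fun j => (hxb j).1)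
      hM (b := b) (by linarith) j
    have h2 := hg.dual_sub_le_of_le_sub_mul hf hk'
      (fun j => (hxb j).1) hM (b := b') (by nlinarith) j
    linarith
  · have : b + 1 ≤ b' := Int.le_of_mul_le_mul_left (by linarith) hn
    linarith [hdm rfl j]

/-- Between `2mb - k` and a later `2mb' + k` with `0 < k < m` lies the index `2mb`. -/
lemma extendFace_add_mul_le_sub_mul (hk : k ≤ m) (hk' : ¬ FaceIdxD m I k) (hf : IsFaceD m I d v)
    (hg : IsGap m I k il iu) (hcross : 0 < k → k < m → 0 ∈ I ∧ m ∈ I)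
    (hxb : ∀ j, v iu j ≤ x j ∧ x j ≤ v il j) (hd0 : k = 0 → ∀ j, x j + x j.rev = d)
    (hdm : k = m → ∀ j, x j + x j.rev = d - 1) {b b' : ℤ} (hbb' : 2 * m * b - k ≤ 2 * m * b' + k)
    (j : Fin (2 * m)) :
    extendFace m k d x v (2 * m * b' + k) j ≤ extendFace m k d x v (2 * m * b - k) j := by
  rw [extendFace_add_mul, extendFace_sub_mul hk hd0 hdm]
  have hn : (0 : ℤ) < 2 * m := by have := j.isLt; omega
  rcases Nat.eq_zero_or_pos k with rfl | hk0
  · have : b ≤ b' := Int.le_of_mul_le_mul_left (by simpa using hbb') hn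
    linarith [hd0 rfl j]
  rcases hk.lt_or_eq with hkm | rfl
  · obtain ⟨h0I, -⟩ := hcross hk0 hkm
    have hbb : b < b' + 1 := Int.lt_of_mul_lt_mul_left (by linarith) hn.le
    have hZ : FaceIdxD m I (2 * m * b) := by simpa using (faceIdxD_natCast (m := m) h0I).add_mul b
    have h1 := hg.le_dual_sub_of_sub_mul_le hf hk'
      (fun j => (hxb j).2) hZ (b := b) (by linarith) j
    have h2 := hg.sub_le_of_le_add_mul hf hk' (fun j => (hxb j).2)
      hZ (b := b') (by nlinarith) j
    linarith
  · have : b - 1 ≤ b' := Int.le_of_mul_le_mul_left (by linarith) hn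
    linarith [hdm rfl j]

lemma sum_extendFace_add (hIm : ∀ a ∈ I, a ≤ m) (hk : k ≤ m) (hkI : k ∉ I)
    (hf : IsFaceD m I d v) (hg : IsGap m I k il iu) (hxs : ∑ j, (v il j - x j) = k - il)
    (hd0 : k = 0 → ∀ j, x j + x j.rev = d) (hdm : k = m → ∀ j, x j + x j.rev = d - 1)
    {i : ℤ} (hi : FaceIdxD m (insert k I) i) : ∑ j, extendFace m k d x v i j + i = m * d := by
  have hxsum : ∑ j, x j = m * d - k := by
    have := hf.sum_add hg.faceIdx_left
    rw [Finset.sum_sub_distrib] at hxs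
    linarith
  have hrev : ∑ j : Fin (2 * m), x j.rev = ∑ j, x j :=
    Fintype.sum_equiv Fin.revPerm _ _ (fun _ => rfl)
  rcases faceIdxD_insert_iff.1 hi with hi | ⟨b, rfl⟩ | ⟨b, rfl⟩
  · simpa only [extendFace_of_faceIdxD hIm hk hkI hi] using hf.sum_add hi
  · simp only [extendFace_add_mul, Finset.sum_sub_distrib, Finset.sum_const, Finset.card_univ,
      Fintype.card_fin, hxsum, nsmul_eq_mul]
    push_cast
    ring
  · simp only [extendFace_sub_mul hk hd0 hdm, Finset.sum_sub_distrib, Finset.sum_const,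
      Finset.card_univ, Fintype.card_fin, hrev, hxsum, nsmul_eq_mul]
    push_cast
    ring

lemma extendFace_mono (hIm : ∀ a ∈ I, a ≤ m) (hk : k ≤ m) (hkI : k ∉ I)
    (hf : IsFaceD m I d v) (hg : IsGap m I k il iu) (hcross : 0 < k → k < m → 0 ∈ I ∧ m ∈ I)
    (hxb : ∀ j, v iu j ≤ x j ∧ x j ≤ v il j) (hd0 : k = 0 → ∀ j, x j + x j.rev = d)
    (hdm : k = m → ∀ j, x j + x j.rev = d - 1) {i i' : ℤ} (hi : FaceIdxD m (insert k I) i)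
    (hi' : FaceIdxD m (insert k I) i') (hii' : i ≤ i') (j : Fin (2 * m)) :
    extendFace m k d x v i' j ≤ extendFace m k d x v i j := by
  have hk' := not_faceIdxD_natCast hIm hk hkI
  have hn : (0 : ℤ) < 2 * m := by have := j.isLt; omega
  have hold : ∀ i, FaceIdxD m I i → extendFace m k d x v i = v i :=
    fun i hi => extendFace_of_faceIdxD hIm hk hkI hi
  have hsub := extendFace_sub_mul (v := v) hk hd0 hdm
  rcases faceIdxD_insert_iff.1 hi with hi | ⟨b, rfl⟩ | ⟨b, rfl⟩ <;>
    rcases faceIdxD_insert_iff.1 hi' with hi' | ⟨b', rfl⟩ | ⟨b', rfl⟩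
  · rw [hold _ hi, hold _ hi']
    exact hf.mono _ _ hi hi' hii' j
  · rw [hold _ hi, extendFace_add_mul]
    exact hg.sub_le_of_le_add_mul hf hk' (fun j => (hxb j).2) hi hii' j
  · rw [hold _ hi, hsub]
    exact hg.dual_sub_le_of_le_sub_mul hf hk' (fun j => (hxb j).1) hi hii' j
  · rw [extendFace_add_mul, hold _ hi']
    exact hg.le_sub_of_add_mul_le hf hk' (fun j => (hxb j).1) hi' hii' j
  · have : b ≤ b' := Int.le_of_mul_le_mul_left (by linarith) hn
    rw [extendFace_add_mul, extendFace_add_mul]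
    linarith
  · exact extendFace_sub_mul_le_add_mul hk hk' hf hg hcross hxb hd0 hdm hii' j
  · rw [hsub, hold _ hi']
    exact hg.le_dual_sub_of_sub_mul_le hf hk' (fun j => (hxb j).2) hi' hii' j
  · exact extendFace_add_mul_le_sub_mul hk hk' hf hg hcross hxb hd0 hdm hii' j
  · have : b ≤ b' := Int.le_of_mul_le_mul_left (by linarith) hn
    rw [hsub, hsub]
    linarith

lemma isFaceD_extendFace (hIm : ∀ a ∈ I, a ≤ m) (hk : k ≤ m) (hkI : k ∉ I)
    (hf : IsFaceD m I d v) (hg : IsGap m I k il iu) (hcross : 0 < k → k < m → 0 ∈ I ∧ m ∈ I)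
    (hxb : ∀ j, v iu j ≤ x j ∧ x j ≤ v il j) (hxs : ∑ j, (v il j - x j) = k - il)
    (hd0 : k = 0 → ∀ j, x j + x j.rev = d) (hdm : k = m → ∀ j, x j + x j.rev = d - 1) :
    IsFaceD m (insert k I) d (extendFace m k d x v) := by
  have hold : ∀ i, FaceIdxD m I i → extendFace m k d x v i = v i :=
    fun i hi => extendFace_of_faceIdxD hIm hk hkI hi
  have hsub := extendFace_sub_mul (v := v) hk hd0 hdm
  have hsum := fun {i} => sum_extendFace_add (i := i) hIm hk hkI hf hg hxs hd0 hdm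
  refine ⟨fun i hi j => ?_, fun i i' hi hi' hii' j =>
    extendFace_mono hIm hk hkI hf hg hcross hxb hd0 hdm hi hi' hii' j,
    fun i i' hi hi' => by linarith [hsum hi, hsum hi'], fun i hi j => ?_⟩
  · rcases faceIdxD_insert_iff.1 hi with hi | ⟨b, rfl⟩ | ⟨b, rfl⟩
    · rw [hold _ hi, hold _ (by simpa using hi.add_mul 1), hf.per i hi j]
    · rw [show 2 * m * b + k + 2 * m = 2 * m * (b + 1) + (k : ℤ) by ring, extendFace_add_mul,
        extendFace_add_mul]
      ring
    · rw [show 2 * m * b - k + 2 * m = 2 * m * (b + 1) - (k : ℤ) by ring, hsub, hsub]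
      ring
  · rcases faceIdxD_insert_iff.1 hi with hi | ⟨b, rfl⟩ | ⟨b, rfl⟩
    · rw [hold _ hi, hold _ hi.neg]
      exact hf.dual i hi j
    · rw [show -(2 * m * b + k) = 2 * m * -b - (k : ℤ) by ring, extendFace_add_mul, hsub,
        Fin.rev_rev]
      ring
    · rw [show -(2 * m * b - k) = 2 * m * -b + (k : ℤ) by ring, hsub, extendFace_add_mul]
      ring

end Extension

section Choice

variable {m : ℕ}

lemma exists_between_sum_eq {u w : VecZ m} (h01 : ∀ j, u j = w j ∨ u j = w j + 1) {s : ℤ}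
    (hs0 : 0 ≤ s) (hs : s ≤ ∑ j, (u j - w j)) :
    ∃ x : VecZ m, (∀ j, w j ≤ x j ∧ x j ≤ u j) ∧ ∑ j, (u j - x j) = s := by
  classical
  set D := univ.filter fun j => u j = w j + 1
  have hD : ∑ j, (u j - w j) = #D := by
    rw [Finset.card_eq_sum_ones, Finset.sum_filter, Nat.cast_sum]
    refine Finset.sum_congr rfl fun j _ => ?_
    rcases h01 j with h | h <;> simp [h]
  obtain ⟨T, hTD, hT⟩ := Finset.exists_subset_card_eq (s := D) (n := s.toNat) (by omega)
  have hTD' : ∀ j ∈ T, u j = w j + 1 := fun j hj => (Finset.mem_filter.1 (hTD hj)).2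
  have hdiff : ∀ j, u j - (if j ∈ T then w j else u j) = if j ∈ T then 1 else 0 := by
    intro j
    split_ifs with hj
    · linarith [hTD' j hj]
    · ring
  refine ⟨fun j => if j ∈ T then w j else u j, fun j => ?_, ?_⟩
  · dsimp only
    split_ifs with hj
    · have := hTD' j hj; omega
    · rcases h01 j with h | h <;> omega
  · rw [Finset.sum_congr rfl fun j _ => hdiff j, Finset.sum_boole, Finset.filter_mem_eq_inter,
      univ_inter, hT]
    omega

def dualMix (u w : VecZ m) (S : Finset (Fin (2 * m))) : VecZ m := fun j =>
  if (j : ℕ) < m then (if j ∈ S then w j else u j) else (if j.rev ∈ S then u j else w j)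

variable {u w : VecZ m} {d' : ℤ}

lemma dualMix_mem_Icc (h01 : ∀ j, u j = w j ∨ u j = w j + 1) (S : Finset (Fin (2 * m)))
    (j : Fin (2 * m)) : w j ≤ dualMix u w S j ∧ dualMix u w S j ≤ u j := by
  unfold dualMix
  rcases h01 j with h | h <;> split_ifs <;> omega

lemma dualMix_add_rev (hdual : ∀ j, w j = d' - u j.rev) (S : Finset (Fin (2 * m)))
    (j : Fin (2 * m)) : dualMix u w S j + dualMix u w S j.rev = d' := by
  have h1 := hdual j
  have h2 := hdual j.rev
  rw [Fin.rev_rev] at h2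
  simp only [dualMix, rev_lt_iff, Fin.rev_rev]
  split_ifs <;> omega

lemma two_mul_sum_sub_dualMix (hdual : ∀ j, w j = d' - u j.rev) (S : Finset (Fin (2 * m))) :
    2 * ∑ j, (u j - dualMix u w S j) = ∑ j, (u j - w j) := by
  have hsym : ∀ j, u j.rev - w j.rev = u j - w j := by
    intro j
    have h1 := hdual j
    have h2 := hdual j.rev
    rw [Fin.rev_rev] at h2
    omega
  rw [sum_eq_halfSum_add_halfSum_rev, sum_eq_halfSum_add_halfSum_rev (fun j => u j - w j)]
  simp only [halfSum, hsym, ← Finset.sum_add_distrib]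
  rw [Finset.mul_sum]
  refine Finset.sum_congr rfl fun j hj => ?_
  have hj : (j : ℕ) < m := by simpa using hj
  have hjr : ¬ (j.rev : ℕ) < m := by rwa [rev_lt_iff, not_not]
  simp only [dualMix, hj, hjr, Fin.rev_rev, if_true, if_false]
  split_ifs <;> linarith [hsym j]

lemma halfSum_dualMix_singleton {j₀ : Fin (2 * m)} (hj₀ : (j₀ : ℕ) < m) :
    halfSum m (dualMix u w {j₀}) = halfSum m (dualMix u w ∅) - (u j₀ - w j₀) := by
  have hmem : j₀ ∈ univ.filter fun j : Fin (2 * m) => (j : ℕ) < m := by simpa using hj₀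
  rw [eq_sub_iff_add_eq, halfSum, halfSum, ← Finset.sum_erase_add _ _ hmem,
    ← Finset.sum_erase_add _ _ hmem]
  have : ∀ j ∈ (univ.filter fun j : Fin (2 * m) => (j : ℕ) < m).erase j₀,
      dualMix u w {j₀} j = dualMix u w ∅ j := by
    intro j hj
    have hjm : (j : ℕ) < m := by simpa using Finset.mem_of_mem_erase hj
    simp [dualMix, Finset.ne_of_mem_erase hj, hjm]
  rw [Finset.sum_congr rfl this]
  simp [dualMix, hj₀]

/-- Taking `u` at one entry and `w` at the other of each pair `{j, j*}` keeps `x j + x j* = d'`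
and the value of `∑ (u - x)`; exchanging the roles on one pair where `u ≠ w` flips `ε(x)`. -/
lemma exists_selfDual_between (h01 : ∀ j, u j = w j ∨ u j = w j + 1)
    (hdual : ∀ j, w j = d' - u j.rev) (hpos : 0 < ∑ j, (u j - w j)) (γ : ZMod 2) :
    ∃ x : VecZ m, (∀ j, w j ≤ x j ∧ x j ≤ u j) ∧ 2 * ∑ j, (u j - x j) = ∑ j, (u j - w j) ∧
      (∀ j, x j + x j.rev = d') ∧ epsVec m x = γ := by
  obtain ⟨j₁, -, hj₁⟩ := Finset.exists_lt_of_sum_lt (by simpa using hpos :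
    ∑ j : Fin (2 * m), (0 : ℤ) < ∑ j, (u j - w j))
  have hsym : u j₁.rev - w j₁.rev = u j₁ - w j₁ := by
    have h1 := hdual j₁
    have h2 := hdual j₁.rev
    rw [Fin.rev_rev] at h2
    omega
  obtain ⟨j₀, hj₀, hdrop⟩ : ∃ j₀ : Fin (2 * m), (j₀ : ℕ) < m ∧ u j₀ - w j₀ = 1 := by
    by_cases h : (j₁ : ℕ) < m
    · exact ⟨j₁, h, by rcases h01 j₁ with h' | h' <;> omega⟩
    · exact ⟨j₁.rev, (rev_lt_iff _).2 h, by rcases h01 j₁ with h' | h' <;> omega⟩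
  by_cases hγ : epsVec m (dualMix u w ∅) = γ
  · exact ⟨_, dualMix_mem_Icc h01 ∅, two_mul_sum_sub_dualMix hdual ∅, dualMix_add_rev hdual ∅, hγ⟩
  · refine ⟨_, dualMix_mem_Icc h01 {j₀}, two_mul_sum_sub_dualMix hdual {j₀},
      dualMix_add_rev hdual {j₀}, ?_⟩
    rw [epsVec_eq_halfSum, halfSum_dualMix_singleton hj₀, hdrop, Int.cast_sub, Int.cast_one,
      ← epsVec_eq_halfSum]
    revert hγ
    generalize epsVec m (dualMix u w ∅) = a
    revert a γ
    decide

end Choice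

section ExtensionSteps

variable {m : ℕ} {I : Finset ℕ} {v : ℤ → VecZ m} {γ : ZMod 2}

lemma exists_extend_zero (hm : 0 < m) (hI : I.Nonempty) (hIm : ∀ a ∈ I, a ≤ m) (h0I : 0 ∉ I)
    (hmem : MemFD m I v γ) :
    ∃ v', (∀ i, FaceIdxD m I i → v' i = v i) ∧ MemFD m (insert 0 I) v' γ := by
  obtain ⟨⟨d, hf⟩, hcond⟩ := hmem
  obtain ⟨il, iu, hg, hgap⟩ := exists_isGap hm hI hIm (Nat.zero_le m) h0I
  have hl := hg.left_lt
  have hu := hg.lt_right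
  push_cast at hl hu
  have hiu : iu = -il := le_antisymm (hg.right_le _ hg.faceIdx_left.neg (by push_cast; omega))
    (by linarith [hg.le_left _ hg.faceIdx_right.neg (by push_cast; omega)])
  obtain ⟨h01, hsum⟩ := hg.drop hf hgap
  have hdual : ∀ j, v iu j = d - v il j.rev := fun j => by
    rw [hiu]; exact hf.apply_neg hg.faceIdx_left j
  obtain ⟨x, hxb, hxs, hxd, hxγ⟩ := exists_selfDual_between h01 hdual (by omega) γ
  have hface := isFaceD_extendFace hIm (Nat.zero_le m) h0I hf hg (fun h => absurd h (lt_irrefl 0))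
    hxb (by push_cast; omega) (fun _ => hxd)
    (fun h => absurd h hm.ne)
  have hv0 : extendFace m 0 d x v 0 = x := funext fun j => by
    simpa using extendFace_add_mul (v := v) (d := d) (k := 0) 0 j
  refine ⟨_, fun i hi => extendFace_of_faceIdxD hIm (Nat.zero_le m) h0I hi, ⟨d, hface⟩, ?_⟩
  have hγ : γ = epsVec m (fun j => muFaceD m (extendFace m 0 d x v) 0 j) := by
    rw [epsVec_muFaceD_zero, hv0, hxγ]
  rw [if_pos (mem_insert_self 0 I)]
  split_ifs with hmI'
  · have hmI : m ∈ I := (mem_insert.1 hmI').resolve_left hm.ne'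
    rw [if_neg h0I, if_pos hmI, epsVec_muFaceD_self] at hcond
    refine ⟨(hface.sub_mem_QveeD_iff (mem_insert_self 0 I) hmI').2 ?_, hγ⟩
    rw [hv0, hxγ, hcond, extendFace_of_faceIdxD hIm (Nat.zero_le m) h0I (faceIdxD_natCast hmI)]
  · exact hγ

lemma exists_extend_self (hm : 0 < m) (hIm : ∀ a ∈ I, a ≤ m) (h0I : 0 ∈ I) (hmI : m ∉ I)
    (hmem : MemFD m I v γ) :
    ∃ v', (∀ i, FaceIdxD m I i → v' i = v i) ∧ MemFD m (insert m I) v' γ := by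
  obtain ⟨⟨d, hf⟩, hcond⟩ := hmem
  rw [if_pos h0I, if_neg hmI] at hcond
  obtain ⟨il, iu, hg, hgap⟩ := exists_isGap hm ⟨0, h0I⟩ hIm le_rfl hmI
  have hl := hg.left_lt
  have hu := hg.lt_right
  have hrefl : ∀ {i}, FaceIdxD m I i → FaceIdxD m I (2 * m - i) := fun hi => by
    have := hi.neg.add_mul 1
    rwa [mul_one, neg_add_eq_sub] at this
  have hiu : iu = 2 * m - il := le_antisymm (hg.right_le _ (hrefl hg.faceIdx_left) (by omega))
    (by linarith [hg.le_left _ (hrefl hg.faceIdx_right) (by omega)])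
  obtain ⟨h01, hsum⟩ := hg.drop hf hgap
  have hdual : ∀ j, v iu j = (d - 1) - v il j.rev := fun j => by
    have := hf.apply_add_mul hg.faceIdx_left.neg 1 j
    rw [hiu, show 2 * m - il = -il + 2 * m * 1 by ring, this, hf.apply_neg hg.faceIdx_left j]
    ring
  obtain ⟨x, hxb, hxs, hxd, hxγ⟩ :=
    exists_selfDual_between h01 hdual (by omega) (epsVec m (v 0) + m)
  have hface := isFaceD_extendFace hIm le_rfl hmI hf hg (fun _ h => absurd h (lt_irrefl m))
    hxb (by omega) (fun h => absurd h hm.ne') (fun _ => hxd)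
  have hvm : extendFace m m d x v m = x := funext fun j => by
    simpa using extendFace_add_mul (v := v) (d := d) (k := m) 0 j
  have hv0 : extendFace m m d x v 0 = v 0 := by
    simpa using extendFace_of_faceIdxD (d := d) (x := x) hIm le_rfl hmI
      (faceIdxD_natCast (m := m) h0I)
  refine ⟨_, fun i hi => extendFace_of_faceIdxD hIm le_rfl hmI hi, ⟨d, hface⟩, ?_⟩
  rw [if_pos (mem_insert_of_mem h0I), if_pos (mem_insert_self m I),
    hface.sub_mem_QveeD_iff (mem_insert_of_mem h0I) (mem_insert_self m I), hvm, hxγ,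
    add_assoc, CharTwo.add_self_eq_zero, add_zero, epsVec_muFaceD_zero, hv0]
  exact ⟨rfl, by rwa [epsVec_muFaceD_zero] at hcond⟩

lemma exists_extend_of_lt {k : ℕ} (hm : 0 < m) (hIm : ∀ a ∈ I, a ≤ m) (h0I : 0 ∈ I)
    (hmI : m ∈ I) (hk : k < m) (hkI : k ∉ I) (hmem : MemFD m I v γ) :
    ∃ v', (∀ i, FaceIdxD m I i → v' i = v i) ∧ MemFD m (insert k I) v' γ := by
  obtain ⟨⟨d, hf⟩, hcond⟩ := hmem
  have hk0 : 0 < k := Nat.pos_of_ne_zero fun h => hkI (h ▸ h0I)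
  obtain ⟨il, iu, hg, hgap⟩ := exists_isGap hm ⟨0, h0I⟩ hIm hk.le hkI
  have hl := hg.left_lt
  have hu := hg.lt_right
  obtain ⟨h01, hsum⟩ := hg.drop hf hgap
  obtain ⟨x, hxb, hxs⟩ := exists_between_sum_eq h01 (s := k - il) (by omega) (by omega)
  have hface := isFaceD_extendFace hIm hk.le hkI hf hg (fun _ _ => ⟨h0I, hmI⟩)
    hxb hxs (fun h => absurd h hk0.ne') (fun h => absurd h hk.ne)
  have hold : ∀ i, FaceIdxD m I i → extendFace m k d x v i = v i :=
    fun i hi => extendFace_of_faceIdxD hIm hk.le hkI hi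
  have hv0 : extendFace m k d x v 0 = v 0 := by simpa using hold _ (faceIdxD_natCast (m := m) h0I)
  refine ⟨_, hold, ⟨d, hface⟩, ?_⟩
  rw [if_pos (mem_insert_of_mem h0I), if_pos (mem_insert_of_mem hmI)]
  rw [if_pos h0I, if_pos hmI] at hcond
  simpa only [muFaceD, hv0, hold _ (faceIdxD_natCast hmI)] using hcond

end ExtensionSteps

section FullFaces

variable {m : ℕ} {d : ℤ} {v : ℤ → VecZ m}

lemma IsFaceD.exists_eq_add_omegaD (hm : 0 < m) (hf : IsFaceD m (range (m + 1)) d v)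
    (j : Fin (2 * m)) : ∃ l : Fin (2 * m), ∀ i, v i j = v 0 j + omegaD m i l := by
  have hper : v (2 * m) j = v 0 j - 1 := by simpa using hf.per 0 (faceIdxD_range hm 0) j
  obtain ⟨L, ⟨hL0, hLv⟩, hLmax⟩ := Int.exists_greatest_of_bdd
    (P := fun i => 0 ≤ i ∧ v i j = v 0 j)
    ⟨2 * m - 1, fun i ⟨_, hi⟩ => by
      by_contra hlt
      have := hf.mono _ _ (faceIdxD_range hm _) (faceIdxD_range hm i)
        (by linarith : 2 * (m : ℤ) ≤ i) j
      omega⟩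
    ⟨0, le_rfl, rfl⟩
  have hL2m : L < 2 * m := by
    by_contra hge
    have := hf.mono _ _ (faceIdxD_range hm _) (faceIdxD_range hm L) (not_lt.1 hge) j
    omega
  refine ⟨⟨L.toNat, by omega⟩, fun i => ?_⟩
  have hn : (0 : ℤ) < 2 * m := by positivity
  obtain ⟨r, hr, hri⟩ : ∃ r : ℕ, r < 2 * m ∧ (r : ℤ) + 2 * m * (i / (2 * m)) = i :=
    ⟨(i % (2 * m)).toNat, by have := Int.emod_lt_of_pos i hn; omega, by
      have := Int.emod_nonneg i hn.ne'; have := Int.mul_ediv_add_emod i (2 * m); omega⟩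
  rw [← hri, hf.apply_add_mul (faceIdxD_range hm r), omegaD_add_mul hm, omegaD_natCast hr]
  have hmono0 := hf.mono 0 r (faceIdxD_range hm 0) (faceIdxD_range hm r) (by positivity) j
  have hmono1 := hf.mono r (2 * m) (faceIdxD_range hm r) (faceIdxD_range hm _) (by omega) j
  split_ifs with hrL
  · have : v r j ≠ v 0 j := fun h => by
      have := hLmax r ⟨by positivity, h⟩
      dsimp only at hrL
      omega
    omega
  · have := hf.mono r L (faceIdxD_range hm r) (faceIdxD_range hm L) (by dsimp only at hrL; omega) j
    omega

lemma IsFaceD.injective_of_eq_add_omegaD (hm : 0 < m) (hf : IsFaceD m (range (m + 1)) d v)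
    {l : Fin (2 * m) → Fin (2 * m)} (hl : ∀ j i, v i j = v 0 j + omegaD m i (l j)) :
    Function.Injective l := by
  intro j j' hjj'
  by_contra hne
  set p := l j
  have hdrop : ∀ j'', l j'' = p → v p j'' - v ((p : ℕ) + 1) j'' = 1 := fun j'' h => by
    rw [hl j'' (p : ℕ), hl j'' ((p : ℕ) + 1), h, omegaD_val_self, omegaD_val_add_one_self]
    ring
  have hsum := hf.sumEq p ((p : ℕ) + 1) (faceIdxD_range hm _) (faceIdxD_range hm _)
  rw [← Finset.sum_sub_distrib] at hsum
  have := Finset.add_le_sum (fun q _ => sub_nonneg.2 (hf.mono p ((p : ℕ) + 1)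
    (faceIdxD_range hm _) (faceIdxD_range hm _) (by omega) q)) (mem_univ j) (mem_univ j') hne
  rw [hdrop j rfl, hdrop j' hjj'.symm, hsum] at this
  omega

lemma IsFaceD.apply_rev_of_eq_add_omegaD (hm : 0 < m) (hf : IsFaceD m (range (m + 1)) d v)
    {l : Fin (2 * m) → Fin (2 * m)} (hl : ∀ j i, v i j = v 0 j + omegaD m i (l j))
    (j : Fin (2 * m)) : l j.rev = (l j).rev := by
  have : ∀ i, omegaD m i (l j) = omegaD m i (l j.rev).rev := by
    intro i
    have h1 := hf.dual i (faceIdxD_range hm i) j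
    rw [hl j i, hl j.rev (-i), omegaD_neg hm] at h1
    linarith [hf.add_rev_zero (by simp) j]
  rw [eq_of_forall_omegaD_eq this, Fin.rev_rev]

lemma even_card_flipSet_of_eq_add_omegaD {l : Equiv.Perm (Fin (2 * m))}
    (hl : ∀ j i, v i j = v 0 j + omegaD m i (l j))
    (hQ : (fun j => muFaceD m v 0 j - muFaceD m v m j) ∈ QveeD m) : Even #(flipSet l) := by
  have hterm : ∀ j ∈ univ.filter fun j : Fin (2 * m) => (j : ℕ) < m,
      muFaceD m v 0 j - muFaceD m v m j = -(if ¬ (l j : ℕ) < m then 1 else 0) := by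
    intro j hj
    have hj : (j : ℕ) < m := by simpa using hj
    simp only [muFaceD, omegaD_zero, hl j m, omegaD_natCast (show m < 2 * m by omega), if_pos hj]
    split_ifs <;> omega
  have heven := (mem_QveeD_iff.1 hQ).2
  rwa [halfSum, Finset.sum_congr rfl hterm, Finset.sum_neg_distrib, even_neg, Finset.sum_boole,
    Finset.filter_filter, Int.even_coe_nat] at heven

end FullFaces

section Surjectivity

variable {m : ℕ} {I : Finset ℕ} {v : ℤ → VecZ m} {γ : ZMod 2}

/-- `(v, γ) = w · (ω_I, 0)` for some `w = t_t σ ∈ W̃_{D_m}`. -/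
def InOrbitStd (m : ℕ) (I : Finset ℕ) (v : ℤ → VecZ m) (γ : ZMod 2) : Prop :=
  ∃ (t : VecZ m) (σ : Equiv.Perm (Fin (2 * m))), InXD m t ∧ InSO m σ ∧
    (∀ i, FaceIdxD m I i → ∀ j, t j + omegaD m i (σ⁻¹ j) = v i j) ∧ epsVec m t = γ

lemma InOrbitStd.of_insert {k : ℕ} {v' : ℤ → VecZ m} (hv' : ∀ i, FaceIdxD m I i → v' i = v i)
    (h : InOrbitStd m (insert k I) v' γ) : InOrbitStd m I v γ := by
  obtain ⟨t, σ, ht, hσ, hv, hγ⟩ := h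
  exact ⟨t, σ, ht, hσ, fun i hi j => by rw [hv i (hi.mono (subset_insert k I)), hv' i hi], hγ⟩

lemma inOrbitStd_range (hm : 0 < m) (hmem : MemFD m (range (m + 1)) v γ) :
    InOrbitStd m (range (m + 1)) v γ := by
  obtain ⟨⟨d, hf⟩, hcond⟩ := hmem
  have h0 : 0 ∈ range (m + 1) := by simp
  rw [if_pos h0, if_pos (by simp : m ∈ range (m + 1))] at hcond
  choose l hl using hf.exists_eq_add_omegaD hm
  have hrev := hf.apply_rev_of_eq_add_omegaD hm hl
  set e := Equiv.ofBijective l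
    (Finite.injective_iff_bijective.1 (hf.injective_of_eq_add_omegaD hm hl))
  have hsign : Equiv.Perm.sign e = 1 := (sign_eq_neg_one_pow_card_flipSet (τ := e) hrev).trans
    (even_card_flipSet_of_eq_add_omegaD (l := e) hl hcond.1).neg_one_pow
  refine ⟨v 0, e⁻¹, fun j j' => by rw [hf.add_rev_zero h0 j, hf.add_rev_zero h0 j'],
    ⟨by rw [Equiv.Perm.sign_inv, hsign], inv_apply_rev hrev⟩, fun i _ j => ?_, ?_⟩
  · rw [inv_inv, hl j i]
    rfl
  · rw [hcond.2, epsVec_muFaceD_zero]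

lemma inOrbitStd_of_zero_mem_of_mem (hm : 0 < m) (hIm : ∀ a ∈ I, a ≤ m) (h0I : 0 ∈ I)
    (hmI : m ∈ I) (hmem : MemFD m I v γ) : InOrbitStd m I v γ := by
  suffices ∀ J I : Finset ℕ, (∀ a ∈ I, a ≤ m) → 0 ∈ I → m ∈ I → range (m + 1) ⊆ I ∪ J →
      ∀ v γ, MemFD m I v γ → InOrbitStd m I v γ from
    this _ I hIm h0I hmI subset_union_right v γ hmem
  intro J
  induction J using Finset.induction_on with
  | empty =>
    intro I hIm _ _ hJ v γ hmem
    obtain rfl : I = range (m + 1) :=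
      subset_antisymm (fun a ha => mem_range.2 (Nat.lt_succ_of_le (hIm a ha))) (by simpa using hJ)
    exact inOrbitStd_range hm hmem
  | insert k J _ ih =>
    intro I hIm h0I hmI hJ v γ hmem
    by_cases hk : k ∈ I ∨ m < k
    · refine ih I hIm h0I hmI (fun a ha => ?_) v γ hmem
      have := hJ ha
      simp only [mem_union, mem_insert, mem_range] at this ha ⊢
      grind
    rw [not_or, not_lt] at hk
    obtain ⟨v', hv', hmem'⟩ := exists_extend_of_lt hm hIm h0I hmI
      (lt_of_le_of_ne hk.2 fun h => hk.1 (h ▸ hmI)) hk.1 hmem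
    refine InOrbitStd.of_insert hv' (ih (insert k I) ((forall_mem_insert _ _ _).2 ⟨hk.2, hIm⟩)
      (mem_insert_of_mem h0I) (mem_insert_of_mem hmI) (fun a ha => ?_) v' γ hmem')
    have := hJ ha
    simp only [mem_union, mem_insert] at this ⊢
    tauto

lemma inOrbitStd_of_zero_mem (hm : 0 < m) (hIm : ∀ a ∈ I, a ≤ m) (h0I : 0 ∈ I)
    (hmem : MemFD m I v γ) : InOrbitStd m I v γ := by
  by_cases hmI : m ∈ I
  · exact inOrbitStd_of_zero_mem_of_mem hm hIm h0I hmI hmem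
  obtain ⟨v', hv', hmem'⟩ := exists_extend_self hm hIm h0I hmI hmem
  exact (inOrbitStd_of_zero_mem_of_mem hm ((forall_mem_insert _ _ _).2 ⟨le_rfl, hIm⟩)
    (mem_insert_of_mem h0I) (mem_insert_self _ _) hmem').of_insert hv'

lemma inOrbitStd_of_memFD (hm : 0 < m) (hI : I.Nonempty) (hIm : ∀ a ∈ I, a ≤ m)
    (hmem : MemFD m I v γ) : InOrbitStd m I v γ := by
  by_cases h0I : 0 ∈ I
  · exact inOrbitStd_of_zero_mem hm hIm h0I hmem
  obtain ⟨v', hv', hmem'⟩ := exists_extend_zero hm hI hIm h0I hmem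
  exact (inOrbitStd_of_zero_mem hm ((forall_mem_insert _ _ _).2 ⟨Nat.zero_le m, hIm⟩)
    (mem_insert_self _ _) hmem').of_insert hv'

end Surjectivity

theorem statement17_general (m : ℕ) (hm : 2 ≤ m)
    (I : Finset ℕ) (hI : I.Nonempty) (hIm : ∀ a ∈ I, a ≤ m) :
    -- every element of `W_{I,D_m}` fixes `(ω_I, 0) ∈ F_{I,D_m}`
    (∀ (tx : VecZ m) (σx : Equiv.Perm (Fin (2 * m))),
      InXD m tx → InSO m σx → MemWI m I tx σx →
        (∀ i, FaceIdxD m I i → ∀ j, tx j + omegaD m i (σx⁻¹ j) = omegaD m i j) ∧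
        epsVec m tx = 0) ∧
    -- the induced map `f` is injective: `f w = f w'` iff `w` and `w'` lie in the
    -- same left `W_{I,D_m}`-coset
    (∀ (t : VecZ m) (σ : Equiv.Perm (Fin (2 * m)))
        (t' : VecZ m) (σ' : Equiv.Perm (Fin (2 * m))),
      InXD m t → InSO m σ → InXD m t' → InSO m σ' →
        (((∀ i, FaceIdxD m I i → ∀ j,
              t j + omegaD m i (σ⁻¹ j) = t' j + omegaD m i (σ'⁻¹ j)) ∧
            epsVec m t = epsVec m t') ↔
          (∃ (tx : VecZ m) (σx : Equiv.Perm (Fin (2 * m))),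
            InXD m tx ∧ InSO m σx ∧ MemWI m I tx σx ∧
              (∀ j, t' j = t j + tx (σ⁻¹ j)) ∧ σ' = σ * σx))) ∧
    -- the induced map `f` is surjective
    (∀ (v : ℤ → VecZ m) (γ : ZMod 2), MemFD m I v γ →
      ∃ (t : VecZ m) (σ : Equiv.Perm (Fin (2 * m))),
        InXD m t ∧ InSO m σ ∧
          (∀ i, FaceIdxD m I i → ∀ j, t j + omegaD m i (σ⁻¹ j) = v i j) ∧
          epsVec m t = γ) := by
  refine ⟨fun tx σx _ hσx hw => fixesOmega_and_epsVec_of_memWI hIm hσx hw,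
    fun t σ t' σ' _ hσ _ hσ' => ⟨?_, ?_⟩,
    fun v γ hmem => inOrbitStd_of_memFD (by omega) hI hIm hmem⟩
  · rintro ⟨heq, heps⟩
    exact exists_memWI_of_image_eq hI hIm hσ hσ' heq heps
  · rintro ⟨tx, σx, -, hσx, hw, ht', rfl⟩
    exact image_eq_of_memWI hIm hσ hσx hw ht'

theorem statement17 (m : ℕ) (hm : 2 ≤ m)
    (I : Finset ℕ) (hI : I.Nonempty) (hIm : ∀ a ∈ I, a ≤ m)
    (h1I : 1 ∈ I → 0 ∈ I) (h2I : m - 1 ∈ I → m ∈ I) :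
    -- every element of `W_{I,D_m}` fixes `(ω_I, 0) ∈ F_{I,D_m}`
    (∀ (tx : VecZ m) (σx : Equiv.Perm (Fin (2 * m))),
      InXD m tx → InSO m σx → MemWI m I tx σx →
        (∀ i, FaceIdxD m I i → ∀ j, tx j + omegaD m i (σx⁻¹ j) = omegaD m i j) ∧
        epsVec m tx = 0) ∧
    -- the induced map `f` is injective: `f w = f w'` iff `w` and `w'` lie in the
    -- same left `W_{I,D_m}`-coset
    (∀ (t : VecZ m) (σ : Equiv.Perm (Fin (2 * m)))
        (t' : VecZ m) (σ' : Equiv.Perm (Fin (2 * m))),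
      InXD m t → InSO m σ → InXD m t' → InSO m σ' →
        (((∀ i, FaceIdxD m I i → ∀ j,
              t j + omegaD m i (σ⁻¹ j) = t' j + omegaD m i (σ'⁻¹ j)) ∧
            epsVec m t = epsVec m t') ↔
          (∃ (tx : VecZ m) (σx : Equiv.Perm (Fin (2 * m))),
            InXD m tx ∧ InSO m σx ∧ MemWI m I tx σx ∧
              (∀ j, t' j = t j + tx (σ⁻¹ j)) ∧ σ' = σ * σx))) ∧
    -- the induced map `f` is surjective
    (∀ (v : ℤ → VecZ m) (γ : ZMod 2), MemFD m I v γ →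
      ∃ (t : VecZ m) (σ : Equiv.Perm (Fin (2 * m))),
        InXD m t ∧ InSO m σ ∧
          (∀ i, FaceIdxD m I i → ∀ j, t j + omegaD m i (σ⁻¹ j) = v i j) ∧
          epsVec m t = γ) :=
  statement17_general m hm I hI hIm

end TypeD
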